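/- arXiv:1501.05197 — 4 statements merged into one kernel-verified Lean document; each statement's English description precedes it below -/
import Mathlib

section
/- Let T be a tree, v a core of T, and L ⊆ V a set that contains a local set for v. If x ≠ y are vertices of the subtree consisting of v and its g-legs such that x,y ∉ L and d(x,v) < d(y,v), then every vertex of L, except possibly the vertices on the g-leg of v that contains y, separates x and y. -/
open SimpleGraph

variable {V : Type*} [Fintype V] [DecidableEq V]

/-- A vertex `τ` separates `u` and `w` if its distances to them differ. -/
def Separates (T : SimpleGraph V) (τ u w : V) : Prop :=
  T.dist τ u ≠ T.dist τ w

/-- There are at least two vertices of `L` separating `u` and `w`. -/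
def HasTwoSeparators (T : SimpleGraph V) (L : Set V) (u w : V) : Prop :=
  ∃ τ₁ ∈ L, ∃ τ₂ ∈ L, τ₁ ≠ τ₂ ∧ Separates T τ₁ u w ∧ Separates T τ₂ u w

/-- `L` is a landmark set (non-landmarks model, `k = 2`): every pair of distinct
vertices outside `L` is separated by at least two vertices of `L`. -/
def IsLandmarkSet (T : SimpleGraph V) (L : Set V) : Prop :=
  ∀ u w : V, u ≠ w → u ∉ L → w ∉ L → HasTwoSeparators T L u w

/-- A core is a vertex of degree at least 3. -/
def IsCore (T : SimpleGraph V) [DecidableRel T.Adj] (v : V) : Prop :=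
  3 ≤ T.degree v

/-- The subtree of the neighbor `x` of `v`: in a tree, the connected component of `x`
obtained by removing `v`, characterized via distances (`w` is in it iff the path from
`v` to `w` passes through `x`). -/
def Branch (T : SimpleGraph V) (v x : V) : Set V :=
  {w | T.dist v w = T.dist x w + 1}

/-- The subtree of the neighbor `x` of `v` is a (standard) leg:
a path containing no cores. -/
def IsStandardLeg (T : SimpleGraph V) [DecidableRel T.Adj] (v x : V) : Prop :=
  T.Adj v x ∧ ∀ w ∈ Branch T v x, T.degree w ≤ 2

/-- A short leg consists of a single vertex. -/
def IsShortLeg (T : SimpleGraph V) [DecidableRel T.Adj] (v x : V) : Prop :=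
  IsStandardLeg T v x ∧ Branch T v x = {x}

/-- A long leg is a standard leg that is not short. -/
def IsLongLeg (T : SimpleGraph V) [DecidableRel T.Adj] (v x : V) : Prop :=
  IsStandardLeg T v x ∧ Branch T v x ≠ {x}

/-- A small core: degree exactly 3, with at least two standard legs, one of which is short. -/
def IsSmallCore (T : SimpleGraph V) [DecidableRel T.Adj] (v : V) : Prop :=
  T.degree v = 3 ∧ ∃ x y : V, x ≠ y ∧ IsShortLeg T v x ∧ IsStandardLeg T v y

/-- A regular core is a core that is not small. -/
def IsRegularCore (T : SimpleGraph V) [DecidableRel T.Adj] (v : V) : Prop :=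
  IsCore T v ∧ ¬ IsSmallCore T v

/-- A modified leg of `v`: a subtree of a neighbor of `v` containing exactly one core,
which is a small core. -/
def IsModifiedLeg (T : SimpleGraph V) [DecidableRel T.Adj] (v x : V) : Prop :=
  T.Adj v x ∧ ∃ u ∈ Branch T v x, IsSmallCore T u ∧
    ∀ w ∈ Branch T v x, IsCore T w → w = u

/-- A g-leg is a standard leg or a modified leg. -/
def IsGLeg (T : SimpleGraph V) [DecidableRel T.Adj] (v x : V) : Prop :=
  IsStandardLeg T v x ∨ IsModifiedLeg T v x

/-- A minor core: a regular core which either (i) has at most one g-leg, or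
(ii) has degree at least 4, no modified legs, exactly two standard legs one of which
is short, and every other subtree of a neighbor contains a regular core. -/
def IsMinorCore (T : SimpleGraph V) [DecidableRel T.Adj] (v : V) : Prop :=
  IsRegularCore T v ∧
  ((∀ x y : V, IsGLeg T v x → IsGLeg T v y → x = y) ∨
   (4 ≤ T.degree v ∧ (∀ x : V, ¬ IsModifiedLeg T v x) ∧
    (∃ x y : V, x ≠ y ∧ IsShortLeg T v x ∧ IsStandardLeg T v y ∧
      ∀ z : V, IsStandardLeg T v z → z = x ∨ z = y) ∧
    (∀ z : V, T.Adj v z → ¬ IsGLeg T v z → ∃ w ∈ Branch T v z, IsRegularCore T w)))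

/-- A main core is a regular core that is not minor. -/
def IsMainCore (T : SimpleGraph V) [DecidableRel T.Adj] (v : V) : Prop :=
  IsRegularCore T v ∧ ¬ IsMinorCore T v

/-- The vertices lying on g-legs of `v`. -/
def GLegVerts (T : SimpleGraph V) [DecidableRel T.Adj] (v : V) : Set V :=
  {w | ∃ x : V, IsGLeg T v x ∧ w ∈ Branch T v x}

/-- Type (s,0) solution on the leg of neighbor `x` of `v`: the empty set. -/
def SolS0 (T : SimpleGraph V) (v x : V) (S : Set V) : Prop :=
  S ∩ Branch T v x = ∅

/-- Type (s,1) solution: one vertex of the leg whose position is at least 2. -/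
def SolS1 (T : SimpleGraph V) (v x : V) (S : Set V) : Prop :=
  ∃ w : V, S ∩ Branch T v x = {w} ∧ 2 ≤ T.dist v w

/-- Type (s,2) solution: at least two vertices of the leg. -/
def SolS2 (T : SimpleGraph V) (v x : V) (S : Set V) : Prop :=
  ∃ w₁ ∈ S ∩ Branch T v x, ∃ w₂ ∈ S ∩ Branch T v x, w₁ ≠ w₂

/-- Type (s,3) solution: exactly the vertex with position 1 (that is, `x`). -/
def SolS3 (T : SimpleGraph V) (v x : V) (S : Set V) : Prop :=
  S ∩ Branch T v x = {x}

/-- For a modified leg `x` of `v`: `u` is its small core (at position `T.dist v u`),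
and `a`, `b` are the two vertices at position `T.dist v u + 1`, where `b` is the
vertex of a short leg of `u` (the vertex `ℓ^b`) and `a` is the other one (`ℓ^a`). -/
def MLegPair (T : SimpleGraph V) [DecidableRel T.Adj] (v x u a b : V) : Prop :=
  u ∈ Branch T v x ∧ IsSmallCore T u ∧ a ≠ b ∧
  a ∈ Branch T v x ∧ b ∈ Branch T v x ∧
  T.dist v a = T.dist v u + 1 ∧ T.dist v b = T.dist v u + 1 ∧
  IsShortLeg T u b

/-- Type (m,1) solution on the modified leg `x` of `v`: either `{ℓ^a}` or `{ℓ^b}`. -/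
def SolM1 (T : SimpleGraph V) [DecidableRel T.Adj] (v x : V) (S : Set V) : Prop :=
  ∃ u a b : V, MLegPair T v x u a b ∧
    (S ∩ Branch T v x = {a} ∨ S ∩ Branch T v x = {b})

/-- Type (m,2) solution: contains neither `ℓ^a` nor `ℓ^b`, contains at least two
vertices of positions at least `i + 2`, and no vertex of position `i + 1`. -/
def SolM2 (T : SimpleGraph V) [DecidableRel T.Adj] (v x : V) (S : Set V) : Prop :=
  ∃ u a b : V, MLegPair T v x u a b ∧ a ∉ S ∧ b ∉ S ∧
    (∃ w₁ ∈ S ∩ Branch T v x, ∃ w₂ ∈ S ∩ Branch T v x, w₁ ≠ w₂ ∧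
      T.dist v u + 2 ≤ T.dist v w₁ ∧ T.dist v u + 2 ≤ T.dist v w₂) ∧
    ∀ w ∈ S ∩ Branch T v x, T.dist v w ≠ T.dist v u + 1

/-- Type (m,3) solution: at least two vertices, one of which is `ℓ^a` or `ℓ^b`. -/
def SolM3 (T : SimpleGraph V) [DecidableRel T.Adj] (v x : V) (S : Set V) : Prop :=
  ∃ u a b : V, MLegPair T v x u a b ∧
    (∃ w₁ ∈ S ∩ Branch T v x, ∃ w₂ ∈ S ∩ Branch T v x, w₁ ≠ w₂) ∧
    (a ∈ S ∨ b ∈ S)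

/-- `S` is a local set for the core `v`. -/
def IsLocalSet (T : SimpleGraph V) [DecidableRel T.Adj] (v : V) (S : Set V) : Prop :=
  S ⊆ GLegVerts T v ∧
  -- (1) at most one standard leg has a type (s,0) solution, and every standard leg
  -- has a solution of one of the types (s,0), (s,1), (s,2), (s,3)
  (∀ x y : V, IsStandardLeg T v x → IsStandardLeg T v y → x ≠ y →
    SolS0 T v x S → SolS0 T v y S → False) ∧
  (∀ x : V, IsStandardLeg T v x →
    SolS0 T v x S ∨ SolS1 T v x S ∨ SolS2 T v x S ∨ SolS3 T v x S) ∧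
  -- (2) every modified leg has a solution of type (m,1), (m,2) or (m,3)
  (∀ x : V, IsModifiedLeg T v x →
    SolM1 T v x S ∨ SolM2 T v x S ∨ SolM3 T v x S) ∧
  -- (3) if some standard leg has a type (s,0) solution, no modified leg has type (m,1)
  ((∃ x : V, IsStandardLeg T v x ∧ SolS0 T v x S) →
    ∀ y : V, IsModifiedLeg T v y → ¬ SolM1 T v y S) ∧
  -- (4) if some long leg has a type (s,0) solution, every other long leg has type (s,2)
  (∀ x : V, IsLongLeg T v x → SolS0 T v x S →
    ∀ y : V, IsLongLeg T v y → y ≠ x → SolS2 T v y S) ∧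
  -- (5) if some short leg has a type (s,0) solution, every long leg has type (s,2) or (s,3)
  ((∃ x : V, IsShortLeg T v x ∧ SolS0 T v x S) →
    ∀ y : V, IsLongLeg T v y → SolS2 T v y S ∨ SolS3 T v y S)

/-- A local set is thrifty if its solutions of types (s,2), (m,2) and (m,3)
consist of exactly two vertices each. -/
def IsThrifty (T : SimpleGraph V) [DecidableRel T.Adj] (v : V) (S : Set V) : Prop :=
  (∀ x : V, IsStandardLeg T v x → SolS2 T v x S → (S ∩ Branch T v x).ncard = 2) ∧
  (∀ x : V, IsModifiedLeg T v x → (SolM2 T v x S ∨ SolM3 T v x S) →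
    (S ∩ Branch T v x).ncard = 2)

/-! Every walk from outside the branch of a neighbour `c` of `v` into it passes through `v`:
by uniqueness of paths in a tree, `vc` is the only edge leaving the branch. Hence, for `z` off
the g-leg containing `y`, `d(z,y) = d(z,v) + d(v,y) > d(z,v) + d(v,x) ≥ d(z,x)`. -/

section TreeBranch

variable {W : Type*} {G : SimpleGraph W}

lemma SimpleGraph.dist_le_length_of_mem_support {u w x : W} (p : G.Walk u w)
    (hx : x ∈ p.support) : G.dist u x ≤ p.length := by
  classical
  exact (dist_le _).trans (p.length_takeUntil_le_length hx)

lemma eq_of_adj_of_notMem_branch_of_mem_branch (hG : G.IsTree) {v c a b : W}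
    (hvc : G.Adj v c) (hab : G.Adj a b) (ha : a ∉ Branch G v c) (hb : b ∈ Branch G v c) :
    a = v := by
  have hca : G.dist c a = G.dist v a + 1 := by
    have ha : G.dist v a ≠ G.dist c a + 1 := ha
    have := hG.dist_eq_dist_add_one_of_adj a hvc
    rw [SimpleGraph.dist_comm (u := a), SimpleGraph.dist_comm (u := a)] at this
    omega
  have hvb : G.dist v b = G.dist c b + 1 := hb
  have hv := hG.dist_eq_dist_add_one_of_adj v hab
  have hc := hG.dist_eq_dist_add_one_of_adj c hab
  have hvab : G.dist v b = G.dist v a + 1 := by omega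
  have hcab : G.dist c a = G.dist c b + 1 := by omega
  obtain ⟨p, hp, hpl⟩ := hG.connected.exists_path_of_dist v a
  obtain ⟨q, -, hql⟩ := hG.connected.exists_path_of_dist c b
  have hq : (Walk.cons hvc q).IsPath := Walk.isPath_of_length_eq_dist _ (by simp [hql, hvb])
  have ha_mem : a ∈ (Walk.cons hvc q).support := by
    by_contra ha_not
    have := dist_le_length_of_mem_support p
      (hG.isAcyclic.mem_support_of_ne_mem_support_of_adj_of_isPath hp hq hab ha_not)
    omega
  rcases List.mem_cons.mp (Walk.support_cons hvc q ▸ ha_mem) with rfl | ha_q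
  · rfl
  · have := dist_le_length_of_mem_support q ha_q
    omega

lemma mem_support_of_notMem_branch_of_mem_branch (hG : G.IsTree) {v c : W} (hvc : G.Adj v c) :
    ∀ {z w : W} (p : G.Walk z w), z ∉ Branch G v c → w ∈ Branch G v c → v ∈ p.support
  | _, _, .nil, hz, hw => absurd hw hz
  | _, _, .cons (v := u) hzu q, hz, hw => by
    rw [Walk.support_cons, List.mem_cons]
    by_cases hu : u ∈ Branch G v c
    · exact .inl (eq_of_adj_of_notMem_branch_of_mem_branch hG hvc hzu hz hu).symm
    · exact .inr (mem_support_of_notMem_branch_of_mem_branch hG hvc q hu hw)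

lemma dist_eq_dist_add_dist_of_notMem_branch_of_mem_branch (hG : G.IsTree) {v c z w : W}
    (hvc : G.Adj v c) (hz : z ∉ Branch G v c) (hw : w ∈ Branch G v c) :
    G.dist z w = G.dist z v + G.dist v w := by
  classical
  obtain ⟨p, hpl⟩ := hG.connected.exists_walk_length_eq_dist z w
  have hv := mem_support_of_notMem_branch_of_mem_branch hG hvc p hz hw
  refine le_antisymm (hG.connected.dist_triangle) ?_
  calc G.dist z v + G.dist v w
      ≤ (p.takeUntil v hv).length + (p.dropUntil v hv).length := add_le_add (dist_le _) (dist_le _)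
    _ = G.dist z w := by rw [← Walk.length_append, p.take_spec hv, hpl]

lemma separates_of_notMem_branch_of_mem_branch (hG : G.IsTree) {v c x y z : W}
    (hvc : G.Adj v c) (hy : y ∈ Branch G v c) (hz : z ∉ Branch G v c)
    (hd : G.dist x v < G.dist y v) : Separates G z x y := by
  have hzy := dist_eq_dist_add_dist_of_notMem_branch_of_mem_branch hG hvc hz hy
  have hzx : G.dist z x ≤ G.dist z v + G.dist v x := hG.connected.dist_triangle
  rw [dist_comm (u := x), dist_comm (u := y)] at hd
  show G.dist z x ≠ G.dist z y
  omega

end TreeBranch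

theorem farther_vertex_separated_by_all_but_its_leg_general
    (T : SimpleGraph V) [DecidableRel T.Adj] (hT : T.IsTree)
    (v : V) (L : Set V)
    (x y : V)
    (hy : y ∈ insert v (GLegVerts T v))
    (hd : T.dist x v < T.dist y v) :
    ∀ z ∈ L, (∀ x' : V, IsGLeg T v x' → y ∈ Branch T v x' → z ∉ Branch T v x') →
      Separates T z x y := by
  intro z _ hz
  obtain rfl | ⟨c, hc, hyc⟩ := hy
  · simp at hd
  have hvc : T.Adj v c := hc.elim (·.1) (·.1)
  exact separates_of_notMem_branch_of_mem_branch hT hvc hyc (hz c hc hyc) hd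

/-- for a core `v` and a set `L` containing a local set for `v`,
if `x ≠ y` are vertices of the subtree consisting of `v` and its g-legs, both
outside `L`, with `d(x,v) < d(y,v)`, then every vertex of `L`, except possibly
those on the g-leg of `v` containing `y`, separates `x` and `y`. -/
theorem farther_vertex_separated_by_all_but_its_leg
    (T : SimpleGraph V) [DecidableRel T.Adj] (hT : T.IsTree)
    (v : V) (hv : IsCore T v) (L : Set V)
    (hloc : ∃ S : Set V, S ⊆ L ∧ IsLocalSet T v S)
    (x y : V)
    (hx : x ∈ insert v (GLegVerts T v)) (hy : y ∈ insert v (GLegVerts T v))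
    (hxy : x ≠ y) (hxL : x ∉ L) (hyL : y ∉ L)
    (hd : T.dist x v < T.dist y v) :
    ∀ z ∈ L, (∀ x' : V, IsGLeg T v x' → y ∈ Branch T v x' → z ∉ Branch T v x') →
      Separates T z x y :=
  farther_vertex_separated_by_all_but_its_leg_general T hT v L x y hy hd
end

section
/- Let T be a tree that has at least two regular cores, and let L ⊆ V be a set such that for every regular core v of T, the subset of L restricted to the vertices of the g-legs of v is a local set for v. Then for every regular core v and every pair of distinct vertices x,y ∉ L lying in the subtree consisting of v and its g-legs, there are at least two vertices of L separating x and y. -/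
open SimpleGraph

variable {V : Type*} [Fintype V] [DecidableEq V]

section TreeAux

set_option linter.unusedSectionVars false

open SimpleGraph Walk

variable {T : SimpleGraph V}

/-- Any path in a tree has length equal to the distance between its endpoints. -/
lemma path_length_eq_dist (hT : T.IsTree) {u w : V} (p : T.Walk u w) (hp : p.IsPath) :
    p.length = T.dist u w := by
  obtain ⟨q, hq, hql⟩ := hT.isConnected.exists_path_of_dist u w
  have : (⟨p, hp⟩ : T.Path u w) = ⟨q, hq⟩ := hT.IsAcyclic.path_unique _ _
  have hpq : p = q := congrArg Subtype.val this
  rw [hpq, hql]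

/-- Splitting the distance at a vertex on a shortest walk. -/
lemma dist_add_of_mem_support (hT : T.IsTree) {u w c : V} {p : T.Walk u w}
    (hp : p.length = T.dist u w) (hc : c ∈ p.support) :
    T.dist u c + T.dist c w = T.dist u w := by
  have h1 : T.dist u c ≤ (p.takeUntil c hc).length := T.dist_le _
  have h2 : T.dist c w ≤ (p.dropUntil c hc).length := T.dist_le _
  have h3 := congrArg Walk.length (p.take_spec hc)
  rw [Walk.length_append] at h3
  have htri := hT.isConnected.dist_triangle (u := u) (v := c) (w := w)
  omega

/-- Adjacent vertices have different distances to any vertex (parity in a tree). -/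
lemma adj_dist_ne (hT : T.IsTree) {v l : V} (h : T.Adj v l) (w : V) :
    T.dist w v ≠ T.dist w l := by
  intro heq
  obtain ⟨p, hp, hpl⟩ := hT.isConnected.exists_path_of_dist w v
  have hlns : l ∉ p.support := by
    intro hls
    have := dist_add_of_mem_support hT hpl hls
    have hlv : T.dist l v = 1 := by
      rw [T.dist_eq_one_iff_adj]; exact h.symm
    omega
  have hq : (p.concat h).IsPath := by
    rw [Walk.concat_eq_append, Walk.isPath_def, Walk.support_append]
    simp only [Walk.support_cons, Walk.support_nil, List.tail_cons]
    refine List.Nodup.append hp.support_nodup (List.nodup_singleton l) ?_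
    intro c hc1 hc2
    rw [List.mem_singleton] at hc2
    subst hc2
    exact hlns hc1
  have := path_length_eq_dist hT (p.concat h) hq
  rw [Walk.length_concat, hpl, heq] at this
  omega

lemma adj_dist_cases (hT : T.IsTree) {v l : V} (h : T.Adj v l) (w : V) :
    T.dist w l = T.dist w v + 1 ∨ T.dist w v = T.dist w l + 1 := by
  have h1 : T.dist w l ≤ T.dist w v + 1 := by
    have := hT.isConnected.dist_triangle (u := w) (v := v) (w := l)
    have hvl : T.dist v l = 1 := by rw [T.dist_eq_one_iff_adj]; exact h
    omega
  have h2 : T.dist w v ≤ T.dist w l + 1 := by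
    have := hT.isConnected.dist_triangle (u := w) (v := l) (w := v)
    have hvl : T.dist l v = 1 := by rw [T.dist_eq_one_iff_adj]; exact h.symm
    omega
  have := adj_dist_ne hT h w
  omega

/-- Crossing lemma: if `τ` is on the `v`-side of the edge `v ~ l` and `z` on the
`l`-side, then the distance from `τ` to `z` splits at `v`. -/
lemma crossing (hT : T.IsTree) {v l τ z : V} (h : T.Adj v l)
    (hτ : T.dist l τ = T.dist v τ + 1) (hz : T.dist v z = T.dist l z + 1) :
    T.dist τ z = T.dist τ v + T.dist v z := by
  obtain ⟨p₁, hp₁, hl₁⟩ := hT.isConnected.exists_path_of_dist τ v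
  obtain ⟨p₂, hp₂, hl₂⟩ := hT.isConnected.exists_path_of_dist l z
  have hdisj : ∀ c ∈ p₁.support, c ∈ p₂.support → False := by
    intro c hc1 hc2
    have e1 := dist_add_of_mem_support hT hl₁ hc1
    have e2 := dist_add_of_mem_support hT hl₂ hc2
    have t1 : T.dist l τ ≤ T.dist l c + T.dist c τ := hT.isConnected.dist_triangle
    have t2 : T.dist v z ≤ T.dist v c + T.dist c z := hT.isConnected.dist_triangle
    have hct : T.dist c τ = T.dist τ c := T.dist_comm
    have hcv : T.dist c v = T.dist v c := T.dist_comm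
    have hτv : T.dist τ v = T.dist v τ := T.dist_comm
    omega
  have hW : (p₁.append (Walk.cons h p₂)).IsPath := by
    rw [Walk.isPath_def, Walk.support_append]
    have : (Walk.cons h p₂).support.tail = p₂.support := by
      simp [Walk.support_cons]
    rw [this]
    exact List.Nodup.append hp₁.support_nodup hp₂.support_nodup hdisj
  have := path_length_eq_dist hT _ hW
  rw [Walk.length_append, Walk.length_cons, hl₁, hl₂] at this
  have hcomm : T.dist τ v = T.dist v τ := T.dist_comm
  omega

lemma dist_getVert_le (hT : T.IsTree) {u w : V} (p : T.Walk u w) (j : ℕ) :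
    T.dist u (p.getVert j) ≤ j := by
  induction p generalizing j with
  | nil => simp [Walk.getVert, T.dist_self]
  | @cons a b c h q ih =>
    cases j with
    | zero => simp [Walk.getVert_zero, T.dist_self]
    | succ j =>
      rw [Walk.getVert_cons_succ]
      have h1 : T.dist a ((q.getVert j)) ≤ T.dist a b + T.dist b (q.getVert j) :=
        hT.isConnected.dist_triangle
      have h2 : T.dist a b = 1 := by rw [T.dist_eq_one_iff_adj]; exact h
      have := ih j
      omega

lemma dist_getVert_ge (hT : T.IsTree) {u w : V} (p : T.Walk u w) (j : ℕ) :
    T.dist (p.getVert j) w + j ≤ p.length + j := by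
  have : T.dist (p.getVert j) w ≤ p.length := by
    induction p generalizing j with
    | nil => simp [Walk.getVert, T.dist_self]
    | @cons a b c h q ih =>
      cases j with
      | zero =>
        rw [Walk.getVert_zero]
        have h1 : T.dist a c ≤ T.dist a b + T.dist b c := hT.isConnected.dist_triangle
        have h2 : T.dist a b = 1 := by rw [T.dist_eq_one_iff_adj]; exact h
        have h3 : T.dist b c ≤ q.length := T.dist_le q
        simp only [Walk.length_cons]
        omega
      | succ j =>
        rw [Walk.getVert_cons_succ]
        have := ih j
        simp only [Walk.length_cons]
        omega
  omega

lemma dist_getVert_tail (hT : T.IsTree) {u w : V} (p : T.Walk u w) {j : ℕ}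
    (hj : j ≤ p.length) : T.dist (p.getVert j) w + j ≤ p.length := by
  induction p generalizing j with
  | nil =>
    simp only [Walk.length_nil, Nat.le_zero] at hj
    subst hj
    simp [Walk.getVert, T.dist_self]
  | @cons a b c h q ih =>
    cases j with
    | zero =>
      rw [Walk.getVert_zero]
      have h1 : T.dist a c ≤ T.dist a b + T.dist b c := hT.isConnected.dist_triangle
      have h2 : T.dist a b = 1 := by rw [T.dist_eq_one_iff_adj]; exact h
      have h3 : T.dist b c ≤ q.length := T.dist_le q
      simp only [Walk.length_cons]
      omega
    | succ j =>
      rw [Walk.getVert_cons_succ]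
      simp only [Walk.length_cons] at hj ⊢
      have := ih (j := j) (by omega)
      omega

/-- On a geodesic from `u` to `w` there is a vertex at every intermediate distance. -/
lemma exists_at_depth (hT : T.IsTree) {u w : V} {j : ℕ} (hj : j ≤ T.dist u w) :
    ∃ a : V, T.dist u a = j ∧ T.dist u a + T.dist a w = T.dist u w := by
  obtain ⟨p, hp, hpl⟩ := hT.isConnected.exists_path_of_dist u w
  refine ⟨p.getVert j, ?_, ?_⟩ <;>
  · have h1 := dist_getVert_le hT p j
    have h2 := dist_getVert_tail hT p (hpl ▸ hj)
    have h3 : T.dist u w ≤ T.dist u (p.getVert j) + T.dist (p.getVert j) w :=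
      hT.isConnected.dist_triangle
    omega

end TreeAux

section BranchAux

set_option linter.unusedSectionVars false

open SimpleGraph Walk

variable {T : SimpleGraph V}

lemma mem_branch_iff {v x w : V} : w ∈ Branch T v x ↔ T.dist v w = T.dist x w + 1 :=
  Iff.rfl

lemma self_mem_branch (hT : T.IsTree) {v l : V} (h : T.Adj v l) : l ∈ Branch T v l := by
  rw [mem_branch_iff, T.dist_self]
  rw [T.dist_eq_one_iff_adj]; exact h

lemma not_self_mem_branch {v l : V} : v ∉ Branch T v l := by
  rw [mem_branch_iff, T.dist_self]; omega

lemma one_le_dist_of_mem_branch {v l z : V} (hz : z ∈ Branch T v l) : 1 ≤ T.dist v z := by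
  rw [mem_branch_iff] at hz; omega

lemma branch_or (hT : T.IsTree) {v l : V} (h : T.Adj v l) (w : V) :
    w ∈ Branch T v l ∨ T.dist l w = T.dist v w + 1 := by
  rcases adj_dist_cases hT h w with hc | hc
  · right; rw [T.dist_comm, hc, T.dist_comm (u := w)]
  · left; rw [mem_branch_iff, T.dist_comm, hc, T.dist_comm (u := w)]

/-- Crossing lemma in terms of branches: if `τ` is not in the branch of `l` at `v`
and `z` is, then the geodesic from `τ` to `z` passes through `v`. -/
lemma dist_of_notMem_branch (hT : T.IsTree) {v l τ z : V} (h : T.Adj v l)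
    (hτ : τ ∉ Branch T v l) (hz : z ∈ Branch T v l) :
    T.dist τ z = T.dist τ v + T.dist v z := by
  rcases branch_or hT h τ with hc | hc
  · exact absurd hc hτ
  · exact crossing hT h hc hz

lemma branch_disjoint (hT : T.IsTree) {v l l' z : V} (h : T.Adj v l) (h' : T.Adj v l')
    (hne : l ≠ l') (hz : z ∈ Branch T v l) : z ∉ Branch T v l' := by
  intro hz'
  have hl' : l' ∉ Branch T v l := by
    intro hm
    rw [mem_branch_iff] at hm
    have : T.dist v l' = 1 := by rw [T.dist_eq_one_iff_adj]; exact h'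
    have h0 : T.dist l l' = 0 := by omega
    have : l = l' := (hT.isConnected.dist_eq_zero_iff (u := l) (v := l')).mp h0
    exact hne this
  have := dist_of_notMem_branch hT h hl' hz
  rw [mem_branch_iff] at hz hz'
  have h1 : T.dist v l' = 1 := by rw [T.dist_eq_one_iff_adj]; exact h'
  have h2 : T.dist l' z = T.dist z l' := T.dist_comm
  have h3 : T.dist l' v = T.dist v l' := T.dist_comm
  have h4 : T.dist l' z = T.dist l' v + T.dist v z := this
  omega

/-- Within a branch, distances are strictly smaller than through `v`. -/
lemma dist_within_branch (hT : T.IsTree) {v l τ z : V} (h : T.Adj v l)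
    (hτ : τ ∈ Branch T v l) (hz : z ∈ Branch T v l) :
    T.dist τ z + 2 ≤ T.dist v τ + T.dist v z := by
  rw [mem_branch_iff] at hτ hz
  have t : T.dist τ z ≤ T.dist τ l + T.dist l z := hT.isConnected.dist_triangle
  have h1 : T.dist τ l = T.dist l τ := T.dist_comm
  have h2 : T.dist v τ = T.dist l τ + 1 := hτ
  omega

/-- Transitivity of branches. -/
lemma branch_trans (hT : T.IsTree) {v l u c z : V} (hvl : T.Adj v l) (huc : T.Adj u c)
    (hu : u ∈ Branch T v l) (hv : v ∉ Branch T u c) (hz : z ∈ Branch T u c) :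
    z ∈ Branch T v l := by
  have hcross : T.dist v z = T.dist v u + T.dist u z := dist_of_notMem_branch hT huc hv hz
  rw [mem_branch_iff] at hu ⊢
  have t : T.dist l z ≤ T.dist l u + T.dist u z := hT.isConnected.dist_triangle
  have hne := adj_dist_ne hT hvl z
  have h1 : T.dist l u = T.dist u l := T.dist_comm
  have h2 : T.dist v u = T.dist l u + 1 := hu
  have h3 : T.dist z v = T.dist v z := T.dist_comm
  have h4 : T.dist z l = T.dist l z := T.dist_comm
  have h5 : T.dist v z ≤ T.dist l z + 1 := by
    rcases adj_dist_cases hT hvl z with hc | hc <;> omega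
  omega

/-- A vertex at each depth of the geodesic into a branch, and it stays in the branch. -/
lemma branch_at_depth (hT : T.IsTree) {v l z : V} (h : T.Adj v l) (hz : z ∈ Branch T v l)
    {j : ℕ} (h1 : 1 ≤ j) (h2 : j ≤ T.dist v z) :
    ∃ a ∈ Branch T v l, T.dist v a = j ∧ T.dist v a + T.dist a z = T.dist v z := by
  obtain ⟨a, ha1, ha2⟩ := exists_at_depth hT h2
  refine ⟨a, ?_, ha1, ha2⟩
  by_contra hna
  have := dist_of_notMem_branch hT h hna hz
  have hc : T.dist a v = T.dist v a := T.dist_comm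
  omega

lemma eq_of_dist_one_mem_branch (hT : T.IsTree) {v l z : V} (h : T.Adj v l)
    (hz : z ∈ Branch T v l) (h1 : T.dist v z = 1) : z = l := by
  rw [mem_branch_iff] at hz
  have : T.dist l z = 0 := by omega
  exact ((hT.isConnected.dist_eq_zero_iff).mp this).symm

/-- Every vertex other than `v` lies in the branch of some neighbor of `v`. -/
lemma exists_branch (hT : T.IsTree) {v w : V} (hne : w ≠ v) :
    ∃ c : V, T.Adj v c ∧ w ∈ Branch T v c := by
  have hpos : 0 < T.dist v w := hT.isConnected.pos_dist_of_ne (Ne.symm hne)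
  obtain ⟨a, ha1, ha2⟩ := exists_at_depth hT (j := 1) hpos
  refine ⟨a, ?_, ?_⟩
  · rw [← T.dist_eq_one_iff_adj]; exact ha1
  · rw [mem_branch_iff]; omega

end BranchAux

section LegAux

set_option linter.unusedSectionVars false
set_option linter.unusedVariables false

open SimpleGraph Walk

variable {T : SimpleGraph V} [DecidableRel T.Adj]

lemma degree_le_two_of_not_core {w : V} (h : ¬ IsCore T w) : T.degree w ≤ 2 := by
  unfold IsCore at h; omega

lemma eq_of_degree_le_two {a z z' b : V} (hdeg : T.degree a ≤ 2)
    (h1 : T.Adj a z) (h2 : T.Adj a z') (h3 : T.Adj a b) (hb : z ≠ b) (hb' : z' ≠ b) :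
    z = z' := by
  by_contra hne
  have hsub : ({z, z', b} : Finset V) ⊆ T.neighborFinset a := by
    intro t ht
    simp only [Finset.mem_insert, Finset.mem_singleton] at ht
    rw [SimpleGraph.mem_neighborFinset]
    rcases ht with rfl | rfl | rfl
    · exact h1
    · exact h2
    · exact h3
  have hcard : ({z, z', b} : Finset V).card = 3 := by
    rw [Finset.card_insert_of_notMem (by simp [hne, hb]),
        Finset.card_insert_of_notMem (by simp [hb']), Finset.card_singleton]
  have hle := Finset.card_le_card hsub
  rw [hcard, T.card_neighborFinset_eq_degree] at hle
  omega

/-- If all vertices of a branch at depth `< j` have degree at most 2, then the branch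
has at most one vertex at depth `j`. -/
lemma unique_at_depth (hT : T.IsTree) {v l : V} (h : T.Adj v l) :
    ∀ j : ℕ, (∀ a ∈ Branch T v l, T.dist v a < j → T.degree a ≤ 2) →
    ∀ z ∈ Branch T v l, ∀ z' ∈ Branch T v l,
      T.dist v z = j → T.dist v z' = j → z = z' := by
  intro j
  induction j using Nat.strong_induction_on with
  | _ j ih =>
    intro hdeg z hz z' hz' hdz hdz'
    have hj1 : 1 ≤ j := hdz ▸ one_le_dist_of_mem_branch hz
    rcases Nat.lt_or_ge j 2 with hj2 | hj2
    · have hj : j = 1 := by omega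
      subst hj
      rw [eq_of_dist_one_mem_branch hT h hz hdz,
          eq_of_dist_one_mem_branch hT h hz' hdz']
    · obtain ⟨a, ha, had, hadd⟩ :=
        branch_at_depth hT h hz (j := j - 1) (by omega) (by omega)
      obtain ⟨a', ha', had', hadd'⟩ :=
        branch_at_depth hT h hz' (j := j - 1) (by omega) (by omega)
      have haa : a = a' := by
        refine ih (j - 1) (by omega) (fun b hb hbd => hdeg b hb (by omega))
          a ha a' ha' had had'
      subst haa
      have haz : T.Adj a z := by
        rw [← T.dist_eq_one_iff_adj]; omega
      have haz' : T.Adj a z' := by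
        rw [← T.dist_eq_one_iff_adj]; omega
      have hadeg : T.degree a ≤ 2 := hdeg a ha (by omega)
      rcases Nat.lt_or_ge j 3 with hj3 | hj3
      · -- j = 2, predecessor of a is v itself (a = l)
        have hj : j = 2 := by omega
        have hal : a = l := eq_of_dist_one_mem_branch hT h ha (by omega)
        subst hal
        refine eq_of_degree_le_two hadeg haz haz' h.symm ?_ ?_
        · intro hzv; subst hzv; rw [T.dist_self] at hdz; omega
        · intro hzv; subst hzv; rw [T.dist_self] at hdz'; omega
      · -- predecessor b of a at depth j - 2
        obtain ⟨b, hbB, hbd, hbdd⟩ :=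
          branch_at_depth hT h ha (j := j - 2) (by omega) (by omega)
        have hab : T.Adj a b := by
          rw [← T.dist_eq_one_iff_adj, T.dist_comm]; omega
        refine eq_of_degree_le_two hadeg haz haz' hab ?_ ?_
        · intro hzb; subst hzb; omega
        · intro hzb; subst hzb; omega

lemma std_leg_unique_depth (hT : T.IsTree) {v l : V} (hleg : IsStandardLeg T v l)
    {z z' : V} (hz : z ∈ Branch T v l) (hz' : z' ∈ Branch T v l)
    (hd : T.dist v z = T.dist v z') : z = z' :=
  unique_at_depth hT hleg.1 (T.dist v z) (fun a ha _ => hleg.2 a ha) z hz z' hz' rfl hd.symm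

lemma std_leg_dist (hT : T.IsTree) {v l : V} (hleg : IsStandardLeg T v l)
    {z z' : V} (hz : z ∈ Branch T v l) (hz' : z' ∈ Branch T v l)
    (hle : T.dist v z ≤ T.dist v z') :
    T.dist v z + T.dist z z' = T.dist v z' := by
  obtain ⟨a, ha, had, hadd⟩ := branch_at_depth hT hleg.1 hz'
    (j := T.dist v z) (one_le_dist_of_mem_branch hz) hle
  have : a = z := std_leg_unique_depth hT hleg ha hz had
  subst this
  omega

end LegAux

section SolAux

set_option linter.unusedSectionVars false
set_option linter.unusedVariables false

open SimpleGraph Walk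

variable {T : SimpleGraph V} [DecidableRel T.Adj]

lemma solS1_nonempty {v x : V} {S : Set V} (h : SolS1 T v x S) :
    (S ∩ Branch T v x).Nonempty := by
  obtain ⟨w, hw, _⟩ := h; exact ⟨w, by rw [hw]; rfl⟩

lemma solS3_nonempty {v x : V} {S : Set V} (h : SolS3 T v x S) :
    (S ∩ Branch T v x).Nonempty := ⟨x, by rw [h]; rfl⟩

lemma solS2_pair {v x : V} {S : Set V} (h : SolS2 T v x S) :
    ∃ w₁ w₂, w₁ ≠ w₂ ∧ w₁ ∈ S ∩ Branch T v x ∧ w₂ ∈ S ∩ Branch T v x := by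
  obtain ⟨w₁, h₁, w₂, h₂, hne⟩ := h; exact ⟨w₁, w₂, hne, h₁, h₂⟩

lemma solM1_nonempty {v x : V} {S : Set V} (h : SolM1 T v x S) :
    (S ∩ Branch T v x).Nonempty := by
  obtain ⟨u, a, b, _, hab⟩ := h
  rcases hab with hab | hab
  · exact ⟨a, by rw [hab]; rfl⟩
  · exact ⟨b, by rw [hab]; rfl⟩

lemma solM2_pair {v x : V} {S : Set V} (h : SolM2 T v x S) :
    ∃ w₁ w₂, w₁ ≠ w₂ ∧ w₁ ∈ S ∩ Branch T v x ∧ w₂ ∈ S ∩ Branch T v x := by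
  obtain ⟨u, a, b, _, _, _, ⟨w₁, h₁, w₂, h₂, hne, _, _⟩, _⟩ := h
  exact ⟨w₁, w₂, hne, h₁, h₂⟩

lemma solM3_pair {v x : V} {S : Set V} (h : SolM3 T v x S) :
    ∃ w₁ w₂, w₁ ≠ w₂ ∧ w₁ ∈ S ∩ Branch T v x ∧ w₂ ∈ S ∩ Branch T v x := by
  obtain ⟨u, a, b, _, ⟨w₁, h₁, w₂, h₂, hne⟩, _⟩ := h
  exact ⟨w₁, w₂, hne, h₁, h₂⟩

lemma distinct_of_branches (hT : T.IsTree) {u c₁ c₂ w₁ w₂ : V}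
    (h1 : T.Adj u c₁) (h2 : T.Adj u c₂) (hne : c₁ ≠ c₂)
    (hw1 : w₁ ∈ Branch T u c₁) (hw2 : w₂ ∈ Branch T u c₂) : w₁ ≠ w₂ :=
  fun he => (branch_disjoint hT h1 h2 hne hw1) (he ▸ hw2)

lemma count_aux (hT : T.IsTree) {L : Set V} {u : V}
    (hS : IsLocalSet T u (L ∩ GLegVerts T u))
    (hreg : IsRegularCore T u) (c₀ c₁ c₂ : V)
    (hadj₁ : T.Adj u c₁) (hadj₂ : T.Adj u c₂)
    (h₁₀ : c₁ ≠ c₀) (h₂₀ : c₂ ≠ c₀) (h₁₂ : c₁ ≠ c₂)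
    (oracle : ∀ c : V, T.Adj u c → c ≠ c₀ → ¬ IsGLeg T u c →
      ∃ w₁ w₂, w₁ ≠ w₂ ∧ w₁ ∈ L ∩ Branch T u c ∧ w₂ ∈ L ∩ Branch T u c)
    (hempty : L ∩ Branch T u c₁ = ∅) :
    ∃ τ₁ τ₂, τ₁ ≠ τ₂ ∧
      (∃ c, T.Adj u c ∧ c ≠ c₀ ∧ τ₁ ∈ L ∩ Branch T u c) ∧
      (∃ c, T.Adj u c ∧ c ≠ c₀ ∧ τ₂ ∈ L ∩ Branch T u c) := by
  set S := L ∩ GLegVerts T u with hSdef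
  have hsub : ∀ c : V, S ∩ Branch T u c ⊆ L ∩ Branch T u c :=
    fun c w hw => ⟨hw.1.1, hw.2⟩
  by_cases hg₁ : IsGLeg T u c₁
  · rcases hg₁ with std₁ | mod₁
    · -- c₁ standard leg with empty solution
      have hS0₁ : SolS0 T u c₁ S := by
        rw [SolS0, ← Set.subset_empty_iff]
        exact hempty ▸ hsub c₁
      by_cases hg₂ : IsGLeg T u c₂
      · rcases hg₂ with std₂ | mod₂
        · -- c₂ standard, not S0
          have hnotS0₂ : ¬ SolS0 T u c₂ S :=
            fun h0 => hS.2.1 c₁ c₂ std₁ std₂ h₁₂ hS0₁ h0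
          have hcase : SolS2 T u c₂ S ∨ (S ∩ Branch T u c₂).Nonempty := by
            rcases hS.2.2.1 c₂ std₂ with h0 | h1 | h2 | h3
            · exact absurd h0 hnotS0₂
            · exact Or.inr (solS1_nonempty h1)
            · exact Or.inl h2
            · exact Or.inr (solS3_nonempty h3)
          rcases hcase with h2 | hone
          · obtain ⟨w₁, w₂, hne, hw₁, hw₂⟩ := solS2_pair h2
            exact ⟨w₁, w₂, hne, ⟨c₂, hadj₂, h₂₀, hsub c₂ hw₁⟩,
              ⟨c₂, hadj₂, h₂₀, hsub c₂ hw₂⟩⟩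
          obtain ⟨w₂, hw₂⟩ := hone
          rcases Nat.lt_or_ge (T.degree u) 4 with hdeg3 | hdeg4
          · -- degree 3: use smallness and condition (4)
            have hdeg : T.degree u = 3 := by
              have := hreg.1; unfold IsCore at this; omega
            by_cases hshort₁ : Branch T u c₁ = {c₁}
            · exact absurd ⟨hdeg, c₁, c₂, h₁₂, ⟨std₁, hshort₁⟩, std₂⟩ hreg.2
            by_cases hshort₂ : Branch T u c₂ = {c₂}
            · exact absurd ⟨hdeg, c₂, c₁, h₁₂.symm, ⟨std₂, hshort₂⟩, std₁⟩ hreg.2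
            have hS2 : SolS2 T u c₂ S :=
              hS.2.2.2.2.2.1 c₁ ⟨std₁, hshort₁⟩ hS0₁ c₂ ⟨std₂, hshort₂⟩ h₁₂.symm
            obtain ⟨w₁', w₂', hne, hw₁', hw₂'⟩ := solS2_pair hS2
            exact ⟨w₁', w₂', hne, ⟨c₂, hadj₂, h₂₀, hsub c₂ hw₁'⟩,
              ⟨c₂, hadj₂, h₂₀, hsub c₂ hw₂'⟩⟩
          · -- degree ≥ 4 : a third branch
            have hcard : 1 ≤ ((((T.neighborFinset u).erase c₀).erase c₁).erase c₂).card := by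
              have h1 := Finset.pred_card_le_card_erase
                (s := T.neighborFinset u) (a := c₀)
              have h2 := Finset.pred_card_le_card_erase
                (s := (T.neighborFinset u).erase c₀) (a := c₁)
              have h3 := Finset.pred_card_le_card_erase
                (s := ((T.neighborFinset u).erase c₀).erase c₁) (a := c₂)
              have h4 : (T.neighborFinset u).card = T.degree u :=
                T.card_neighborFinset_eq_degree u
              omega
            obtain ⟨c₃, hc₃⟩ := Finset.card_pos.mp hcard
            rw [Finset.mem_erase, Finset.mem_erase, Finset.mem_erase,
              SimpleGraph.mem_neighborFinset] at hc₃
            obtain ⟨h₃₂, h₃₁, h₃₀, hadj₃⟩ := hc₃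
            -- c₃'s branch contributes
            by_cases hg₃ : IsGLeg T u c₃
            · have hw₃ : (S ∩ Branch T u c₃).Nonempty := by
                rcases hg₃ with std₃ | mod₃
                · have : ¬ SolS0 T u c₃ S :=
                    fun h0 => hS.2.1 c₁ c₃ std₁ std₃ (Ne.symm h₃₁) hS0₁ h0
                  rcases hS.2.2.1 c₃ std₃ with h0 | h1' | h2' | h3'
                  · exact absurd h0 this
                  · exact solS1_nonempty h1'
                  · obtain ⟨w, _, _, _, _⟩ := h2'; exact ⟨w, ‹_›⟩
                  · exact solS3_nonempty h3'
                · rcases hS.2.2.2.1 c₃ mod₃ with hm1 | hm2 | hm3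
                  · exact solM1_nonempty hm1
                  · obtain ⟨w, w', _, hw, _⟩ := solM2_pair hm2; exact ⟨w, hw⟩
                  · obtain ⟨w, w', _, hw, _⟩ := solM3_pair hm3; exact ⟨w, hw⟩
              obtain ⟨w₃, hw₃⟩ := hw₃
              refine ⟨w₂, w₃, ?_, ⟨c₂, hadj₂, h₂₀, hsub c₂ hw₂⟩,
                ⟨c₃, hadj₃, h₃₀, hsub c₃ hw₃⟩⟩
              exact distinct_of_branches hT hadj₂ hadj₃ (Ne.symm h₃₂) hw₂.2 hw₃.2
            · obtain ⟨w₁', w₂', hne, hw₁', hw₂'⟩ := oracle c₃ hadj₃ h₃₀ hg₃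
              exact ⟨w₁', w₂', hne, ⟨c₃, hadj₃, h₃₀, hw₁'⟩, ⟨c₃, hadj₃, h₃₀, hw₂'⟩⟩
        · -- c₂ modified: condition (3) rules out SolM1
          have hnoM1 : ¬ SolM1 T u c₂ S :=
            hS.2.2.2.2.1 ⟨c₁, std₁, hS0₁⟩ c₂ mod₂
          rcases hS.2.2.2.1 c₂ mod₂ with hm1 | hm2 | hm3
          · exact absurd hm1 hnoM1
          · obtain ⟨w₁, w₂, hne, hw₁, hw₂⟩ := solM2_pair hm2
            exact ⟨w₁, w₂, hne, ⟨c₂, hadj₂, h₂₀, hsub c₂ hw₁⟩,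
              ⟨c₂, hadj₂, h₂₀, hsub c₂ hw₂⟩⟩
          · obtain ⟨w₁, w₂, hne, hw₁, hw₂⟩ := solM3_pair hm3
            exact ⟨w₁, w₂, hne, ⟨c₂, hadj₂, h₂₀, hsub c₂ hw₁⟩,
              ⟨c₂, hadj₂, h₂₀, hsub c₂ hw₂⟩⟩
      · obtain ⟨w₁, w₂, hne, hw₁, hw₂⟩ := oracle c₂ hadj₂ h₂₀ hg₂
        exact ⟨w₁, w₂, hne, ⟨c₂, hadj₂, h₂₀, hw₁⟩, ⟨c₂, hadj₂, h₂₀, hw₂⟩⟩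
    · -- c₁ modified: its solution is nonempty, contradicting emptiness
      have : (S ∩ Branch T u c₁).Nonempty := by
        rcases hS.2.2.2.1 c₁ mod₁ with hm1 | hm2 | hm3
        · exact solM1_nonempty hm1
        · obtain ⟨w, w', _, hw, _⟩ := solM2_pair hm2; exact ⟨w, hw⟩
        · obtain ⟨w, w', _, hw, _⟩ := solM3_pair hm3; exact ⟨w, hw⟩
      obtain ⟨w, hw⟩ := this
      have : w ∈ L ∩ Branch T u c₁ := hsub c₁ hw
      rw [hempty] at this
      exact absurd this (Set.notMem_empty w)
  · obtain ⟨w₁, w₂, hne, hw₁, hw₂⟩ := oracle c₁ hadj₁ h₁₀ hg₁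
    rw [hempty] at hw₁
    exact absurd hw₁ (Set.notMem_empty w₁)

lemma count_two (hT : T.IsTree) {L : Set V} {u : V}
    (hS : IsLocalSet T u (L ∩ GLegVerts T u))
    (hreg : IsRegularCore T u) (c₀ : V)
    (oracle : ∀ c : V, T.Adj u c → c ≠ c₀ → ¬ IsGLeg T u c →
      ∃ w₁ w₂, w₁ ≠ w₂ ∧ w₁ ∈ L ∩ Branch T u c ∧ w₂ ∈ L ∩ Branch T u c) :
    ∃ τ₁ τ₂, τ₁ ≠ τ₂ ∧
      (∃ c, T.Adj u c ∧ c ≠ c₀ ∧ τ₁ ∈ L ∩ Branch T u c) ∧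
      (∃ c, T.Adj u c ∧ c ≠ c₀ ∧ τ₂ ∈ L ∩ Branch T u c) := by
  have hA : 1 < ((T.neighborFinset u).erase c₀).card := by
    have h1 := Finset.pred_card_le_card_erase (s := T.neighborFinset u) (a := c₀)
    have h4 : (T.neighborFinset u).card = T.degree u := T.card_neighborFinset_eq_degree u
    have := hreg.1; unfold IsCore at this; omega
  obtain ⟨c₁, hc₁, c₂, hc₂, hc12⟩ := Finset.one_lt_card.mp hA
  rw [Finset.mem_erase, SimpleGraph.mem_neighborFinset] at hc₁ hc₂
  obtain ⟨h₁₀, hadj₁⟩ := hc₁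
  obtain ⟨h₂₀, hadj₂⟩ := hc₂
  by_cases he₁ : (L ∩ Branch T u c₁).Nonempty
  · by_cases he₂ : (L ∩ Branch T u c₂).Nonempty
    · obtain ⟨w₁, hw₁⟩ := he₁
      obtain ⟨w₂, hw₂⟩ := he₂
      exact ⟨w₁, w₂, distinct_of_branches hT hadj₁ hadj₂ hc12 hw₁.2 hw₂.2,
        ⟨c₁, hadj₁, h₁₀, hw₁⟩, ⟨c₂, hadj₂, h₂₀, hw₂⟩⟩
    · exact count_aux hT hS hreg c₀ c₂ c₁ hadj₂ hadj₁ h₂₀ h₁₀ (Ne.symm hc12) oracle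
        (Set.not_nonempty_iff_eq_empty.mp he₂)
  · exact count_aux hT hS hreg c₀ c₁ c₂ hadj₁ hadj₂ h₁₀ h₂₀ hc12 oracle
      (Set.not_nonempty_iff_eq_empty.mp he₁)

end SolAux

section StructAux

set_option linter.unusedSectionVars false
set_option linter.unusedVariables false

open SimpleGraph Walk

variable {T : SimpleGraph V} [DecidableRel T.Adj]

/-- Vertices deeper than a unique shallowest branching point `u` lie in branches
of `u` pointing away from `v`. -/
lemma over_core (hT : T.IsTree) {v l u z : V} (hadj : T.Adj v l)
    (hu : u ∈ Branch T v l)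
    (hnc : ∀ a ∈ Branch T v l, T.dist v a < T.dist v u → T.degree a ≤ 2)
    (hz : z ∈ Branch T v l) (hd : T.dist v u < T.dist v z) :
    ∃ c', T.Adj u c' ∧ v ∉ Branch T u c' ∧ z ∈ Branch T u c' ∧
      T.dist v u + T.dist u z = T.dist v z := by
  obtain ⟨a, ha, had, hadd⟩ := branch_at_depth hT hadj hz (j := T.dist v u)
      (one_le_dist_of_mem_branch hu) (le_of_lt hd)
  have hau : a = u := unique_at_depth hT hadj (T.dist v u) hnc a ha u hu had rfl
  subst hau
  have h1 : 1 ≤ T.dist a z := by omega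
  obtain ⟨c', hc'd, hc'add⟩ := exists_at_depth hT (u := a) (w := z) h1
  have hadj' : T.Adj a c' := by rw [← T.dist_eq_one_iff_adj]; exact hc'd
  have hzB : z ∈ Branch T a c' := by rw [mem_branch_iff]; omega
  have hvB : v ∉ Branch T a c' := by
    intro hv
    rw [mem_branch_iff] at hv
    have t : T.dist v z ≤ T.dist v c' + T.dist c' z := hT.isConnected.dist_triangle
    have e1 : T.dist a v = T.dist v a := T.dist_comm
    have e2 : T.dist c' v = T.dist v c' := T.dist_comm
    omega
  exact ⟨c', hadj', hvB, hzB, by omega⟩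

/-- The three neighbors of a small core sitting inside a branch of a vertex of
degree at least 3. -/
lemma small_core_legs (hT : T.IsTree) {v l u : V} (hadj : T.Adj v l)
    (hu : u ∈ Branch T v l) (hsmall : IsSmallCore T u) (hvdeg : 3 ≤ T.degree v) :
    ∃ β γ c₀ : V, β ≠ γ ∧ IsShortLeg T u β ∧ IsStandardLeg T u γ ∧
      T.Adj u c₀ ∧ v ∈ Branch T u c₀ ∧ β ≠ c₀ ∧ γ ≠ c₀ ∧
      (∀ c, T.Adj u c → c = c₀ ∨ c = β ∨ c = γ) := by
  obtain ⟨hdeg3, β, γ, hbg, hshort, hstd⟩ := hsmall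
  have hvu : v ≠ u := fun h => not_self_mem_branch (h ▸ hu)
  obtain ⟨c₀, hc₀adj, hc₀v⟩ := exists_branch hT (v := u) (w := v) hvu
  have hβdeg : T.degree β ≤ 2 := hshort.1.2 β (self_mem_branch hT hshort.1.1)
  have hβc₀ : β ≠ c₀ := by
    intro h
    rw [← h, hshort.2] at hc₀v
    have hvβ : v = β := hc₀v
    rw [hvβ] at hvdeg
    omega
  have hγc₀ : γ ≠ c₀ := by
    intro h
    rw [← h] at hc₀v
    have := hstd.2 v hc₀v
    omega
  have hcompl : ∀ c, T.Adj u c → c = c₀ ∨ c = β ∨ c = γ := by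
    intro c hc
    have hsub : ({c₀, β, γ} : Finset V) ⊆ T.neighborFinset u := by
      intro t ht
      simp only [Finset.mem_insert, Finset.mem_singleton] at ht
      rw [SimpleGraph.mem_neighborFinset]
      rcases ht with rfl | rfl | rfl
      · exact hc₀adj
      · exact hshort.1.1
      · exact hstd.1
    have hcard : ({c₀, β, γ} : Finset V).card = 3 := by
      rw [Finset.card_insert_of_notMem (by simp [Ne.symm hβc₀, Ne.symm hγc₀]),
          Finset.card_insert_of_notMem (by simp [hbg]), Finset.card_singleton]
    have heq : ({c₀, β, γ} : Finset V) = T.neighborFinset u := by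
      apply Finset.eq_of_subset_of_card_le hsub
      rw [hcard, T.card_neighborFinset_eq_degree u, hdeg3]
    have : c ∈ T.neighborFinset u := by rw [SimpleGraph.mem_neighborFinset]; exact hc
    rw [← heq] at this
    simpa using this
  exact ⟨β, γ, c₀, hbg, hshort, hstd, hc₀adj, hc₀v, hβc₀, hγc₀, hcompl⟩

/-- If a branch of a vertex of degree ≥ 3 contains a core and all its cores are
small, then it is a modified leg. -/
lemma modified_of_all_small (hT : T.IsTree) {p c : V} (hadj : T.Adj p c)
    (hpdeg : 3 ≤ T.degree p)
    (hcore : ∃ w ∈ Branch T p c, IsCore T w)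
    (hall : ∀ w ∈ Branch T p c, IsCore T w → IsSmallCore T w) :
    IsModifiedLeg T p c := by
  classical
  obtain ⟨w₀, hw₀, hw₀c⟩ := hcore
  set F := Finset.univ.filter (fun w => w ∈ Branch T p c ∧ IsCore T w) with hF
  have hF₀ : w₀ ∈ F := by simp [hF, hw₀, hw₀c]
  obtain ⟨u, huF, hmin⟩ := F.exists_min_image (fun w => T.dist p w) ⟨w₀, hF₀⟩
  rw [hF, Finset.mem_filter] at huF
  obtain ⟨-, huB, hucore⟩ := huF
  have husmall : IsSmallCore T u := hall u huB hucore
  have hnc : ∀ a ∈ Branch T p c, T.dist p a < T.dist p u → T.degree a ≤ 2 := by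
    intro a ha hda
    by_contra hdeg
    have : IsCore T a := by unfold IsCore; omega
    have : a ∈ F := by simp [hF, ha, this]
    have := hmin a this
    omega
  obtain ⟨β, γ, c₀, hbg, hshort, hstd, hc₀adj, hc₀v, hβc₀, hγc₀, hcompl⟩ :=
    small_core_legs hT hadj huB husmall hpdeg
  refine ⟨hadj, u, huB, husmall, ?_⟩
  intro w hw hwc
  have hwF : w ∈ F := by simp [hF, hw, hwc]
  have hge : T.dist p u ≤ T.dist p w := hmin w hwF
  rcases eq_or_lt_of_le hge with heq | hlt
  · exact unique_at_depth hT hadj (T.dist p u) hnc w hw u huB heq.symm rfl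
  · exfalso
    obtain ⟨c', hc'adj, hc'v, hwB', hsplit⟩ := over_core hT hadj huB hnc hw hlt
    rcases hcompl c' hc'adj with h | h | h
    · rw [h] at hc'v
      exact hc'v hc₀v
    · rw [h, hshort.2] at hwB'
      have hwβ : w = β := hwB'
      rw [hwβ] at hwc
      have := hshort.1.2 β (self_mem_branch hT hshort.1.1)
      unfold IsCore at hwc
      omega
    · rw [h] at hwB'
      have := hstd.2 w hwB'
      unfold IsCore at hwc
      omega

/-- A branch of a regular core containing a core, which is not a modified leg,
contains at least two landmarks. -/
lemma branch_two_aux (hT : T.IsTree) {L : Set V}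
    (hloc : ∀ v : V, IsRegularCore T v → IsLocalSet T v (L ∩ GLegVerts T v)) :
    ∀ n : ℕ, ∀ p c : V, (Branch T p c).ncard ≤ n →
      IsRegularCore T p → T.Adj p c → (∃ w ∈ Branch T p c, IsCore T w) →
      ¬ IsModifiedLeg T p c →
      ∃ w₁ w₂, w₁ ≠ w₂ ∧ w₁ ∈ L ∩ Branch T p c ∧ w₂ ∈ L ∩ Branch T p c := by
  intro n
  induction n with
  | zero =>
    intro p c hn hreg hadj hcore hnm
    exfalso
    have hmem := self_mem_branch hT hadj
    have : 0 < (Branch T p c).ncard :=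
      (Set.ncard_pos (Set.toFinite _)).mpr ⟨c, hmem⟩
    omega
  | succ n ih =>
    intro p c hn hreg hadj hcore hnm
    have hreg2 : ∃ u ∈ Branch T p c, IsRegularCore T u := by
      by_contra hno
      push_neg at hno
      refine hnm (modified_of_all_small hT hadj hreg.1 hcore ?_)
      intro w hw hc
      by_contra hns
      exact hno w hw ⟨hc, hns⟩
    obtain ⟨u, huB, hureg⟩ := hreg2
    have hpu : p ≠ u := fun h => not_self_mem_branch (h ▸ huB)
    obtain ⟨c₀, hc₀adj, hc₀p⟩ := exists_branch hT (v := u) (w := p) hpu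
    have horacle : ∀ c' : V, T.Adj u c' → c' ≠ c₀ → ¬ IsGLeg T u c' →
        ∃ w₁ w₂, w₁ ≠ w₂ ∧ w₁ ∈ L ∩ Branch T u c' ∧ w₂ ∈ L ∩ Branch T u c' := by
      intro c' hadj' hne' hg'
      have hpnot : p ∉ Branch T u c' :=
        fun hmem => (branch_disjoint hT hadj' hc₀adj hne' hmem) hc₀p
      have hsub : Branch T u c' ⊆ Branch T p c :=
        fun z hz => branch_trans hT hadj hadj' huB hpnot hz
      have hss : Branch T u c' ⊂ Branch T p c := by
        rw [Set.ssubset_def]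
        exact ⟨hsub, fun habs => not_self_mem_branch (habs huB)⟩
      have hlt : (Branch T u c').ncard < (Branch T p c).ncard :=
        Set.ncard_lt_ncard hss (Set.toFinite _)
      have hnstd : ¬ IsStandardLeg T u c' := fun h => hg' (Or.inl h)
      have hnmod : ¬ IsModifiedLeg T u c' := fun h => hg' (Or.inr h)
      have hcore' : ∃ w ∈ Branch T u c', IsCore T w := by
        unfold IsStandardLeg at hnstd
        push_neg at hnstd
        obtain ⟨w, hw, hwd⟩ := hnstd hadj'
        exact ⟨w, hw, by unfold IsCore; omega⟩
      exact ih u c' (by omega) hureg hadj' hcore' hnmod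
    obtain ⟨τ₁, τ₂, hne, ⟨c₁, hadj₁, h₁₀, hτ₁⟩, ⟨c₂, hadj₂, h₂₀, hτ₂⟩⟩ :=
      count_two hT (hloc u hureg) hureg c₀ horacle
    have hin : ∀ {cc τ : V}, T.Adj u cc → cc ≠ c₀ → τ ∈ L ∩ Branch T u cc →
        τ ∈ L ∩ Branch T p c := by
      intro cc τ hadjcc hnecc hτ
      have hpnot : p ∉ Branch T u cc :=
        fun hmem => (branch_disjoint hT hadjcc hc₀adj hnecc hmem) hc₀p
      exact ⟨hτ.1, branch_trans hT hadj hadjcc huB hpnot hτ.2⟩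
    exact ⟨τ₁, τ₂, hne, hin hadj₁ h₁₀ hτ₁, hin hadj₂ h₂₀ hτ₂⟩

lemma branch_two (hT : T.IsTree) {L : Set V}
    (hloc : ∀ v : V, IsRegularCore T v → IsLocalSet T v (L ∩ GLegVerts T v))
    {p c : V} (hreg : IsRegularCore T p) (hadj : T.Adj p c)
    (hcore : ∃ w ∈ Branch T p c, IsCore T w) (hnm : ¬ IsModifiedLeg T p c) :
    ∃ w₁ w₂, w₁ ≠ w₂ ∧ w₁ ∈ L ∩ Branch T p c ∧ w₂ ∈ L ∩ Branch T p c :=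
  branch_two_aux hT hloc (Branch T p c).ncard p c le_rfl hreg hadj hcore hnm

/-- The key counting lemma: a regular core always has two landmarks in the union of
its branches other than any designated one. -/
lemma key_two (hT : T.IsTree) {L : Set V}
    (hloc : ∀ v : V, IsRegularCore T v → IsLocalSet T v (L ∩ GLegVerts T v))
    {v : V} (hreg : IsRegularCore T v) (l : V) :
    ∃ τ₁ τ₂, τ₁ ≠ τ₂ ∧
      (∃ c, T.Adj v c ∧ c ≠ l ∧ τ₁ ∈ L ∩ Branch T v c) ∧
      (∃ c, T.Adj v c ∧ c ≠ l ∧ τ₂ ∈ L ∩ Branch T v c) := by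
  refine count_two hT (hloc v hreg) hreg l ?_
  intro c hadjc hnec hgc
  have hnstd : ¬ IsStandardLeg T v c := fun h => hgc (Or.inl h)
  have hnmod : ¬ IsModifiedLeg T v c := fun h => hgc (Or.inr h)
  have hcore' : ∃ w ∈ Branch T v c, IsCore T w := by
    unfold IsStandardLeg at hnstd
    push_neg at hnstd
    obtain ⟨w, hw, hwd⟩ := hnstd hadjc
    exact ⟨w, hw, by unfold IsCore; omega⟩
  exact branch_two hT hloc hreg hadjc hcore' hnmod

end StructAux

section SepAux

set_option linter.unusedSectionVars false
set_option linter.unusedVariables false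

open SimpleGraph Walk

variable {T : SimpleGraph V} [DecidableRel T.Adj]

lemma sep_out_lt (hT : T.IsTree) {v ly c τ x y : V} (hadjl : T.Adj v ly)
    (hadjc : T.Adj v c) (hnec : c ≠ ly) (hτ : τ ∈ Branch T v c)
    (hy : y ∈ Branch T v ly) (hd : T.dist v x < T.dist v y) :
    T.dist τ x ≠ T.dist τ y := by
  have hτB : τ ∉ Branch T v ly := branch_disjoint hT hadjc hadjl hnec hτ
  have hτy : T.dist τ y = T.dist τ v + T.dist v y :=
    dist_of_notMem_branch hT hadjl hτB hy
  by_cases hx : x ∈ Branch T v c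
  · have h5 := dist_within_branch hT hadjc hτ hx
    have e : T.dist v τ = T.dist τ v := T.dist_comm
    omega
  · have h6 := dist_of_notMem_branch hT hadjc hx hτ
    have e1 : T.dist x τ = T.dist τ x := T.dist_comm
    have e2 : T.dist x v = T.dist v x := T.dist_comm
    have e3 : T.dist v τ = T.dist τ v := T.dist_comm
    omega

lemma sep_out_branch (hT : T.IsTree) {v l τ x y : V} (hadj : T.Adj v l)
    (hτ : τ ∉ Branch T v l) (hx : x ∈ Branch T v l) (hy : y ∈ Branch T v l)
    (hd : T.dist v x ≠ T.dist v y) : T.dist τ x ≠ T.dist τ y := by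
  have h1 := dist_of_notMem_branch hT hadj hτ hx
  have h2 := dist_of_notMem_branch hT hadj hτ hy
  omega

lemma sep_in_branch (hT : T.IsTree) {v lx ly τ x y : V} (hadjx : T.Adj v lx)
    (hadjy : T.Adj v ly) (hne : lx ≠ ly) (hτ : τ ∈ Branch T v lx)
    (hx : x ∈ Branch T v lx) (hy : y ∈ Branch T v ly)
    (hd : T.dist v x ≤ T.dist v y + 1) : T.dist τ x ≠ T.dist τ y := by
  have hτB : τ ∉ Branch T v ly := branch_disjoint hT hadjx hadjy hne hτ
  have hτy : T.dist τ y = T.dist τ v + T.dist v y :=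
    dist_of_notMem_branch hT hadjy hτB hy
  have h5 := dist_within_branch hT hadjx hτ hx
  have e : T.dist v τ = T.dist τ v := T.dist_comm
  omega

/-- If a standard leg has an empty solution, and another leg contains a non-landmark
at the same depth as a non-landmark of the first leg, then the other leg carries two
landmarks. -/
lemma eq_depth_aux (hT : T.IsTree) {L : Set V} {v l₁ l₂ z₁ z₂ : V}
    (hS : IsLocalSet T v (L ∩ GLegVerts T v))
    (std₁ : IsStandardLeg T v l₁) (hS0 : SolS0 T v l₁ (L ∩ GLegVerts T v))
    (hg₂ : IsGLeg T v l₂) (hne : l₁ ≠ l₂)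
    (hz₁ : z₁ ∈ Branch T v l₁) (hz₁L : z₁ ∉ L)
    (hz₂ : z₂ ∈ Branch T v l₂) (hz₂L : z₂ ∉ L)
    (hdep : T.dist v z₁ = T.dist v z₂) :
    ∃ τ₁ τ₂, τ₁ ≠ τ₂ ∧ τ₁ ∈ (L ∩ GLegVerts T v) ∩ Branch T v l₂ ∧
      τ₂ ∈ (L ∩ GLegVerts T v) ∩ Branch T v l₂ := by
  set S := L ∩ GLegVerts T v with hSdef
  rcases hg₂ with std₂ | mod₂
  · have hnotS0₂ : ¬ SolS0 T v l₂ S := fun h0 => hS.2.1 l₁ l₂ std₁ std₂ hne hS0 h0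
    by_cases hsh₂ : Branch T v l₂ = {l₂}
    · -- short second leg: impossible
      exfalso
      have hz₂l : z₂ = l₂ := by rw [hsh₂] at hz₂; exact hz₂
      have hdl₂ : T.dist v l₂ = 1 := by rw [T.dist_eq_one_iff_adj]; exact std₂.1
      rcases hS.2.2.1 l₂ std₂ with h0 | h1 | h2 | h3
      · exact hnotS0₂ h0
      · obtain ⟨w, hw, hd2⟩ := h1
        have hwm : w ∈ S ∩ Branch T v l₂ := by rw [hw]; rfl
        have : w = l₂ := by rw [hsh₂] at hwm; exact hwm.2
        rw [this, hdl₂] at hd2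
        omega
      · obtain ⟨w₁, hw₁, w₂, hw₂, hnw⟩ := h2
        rw [hsh₂] at hw₁ hw₂
        exact hnw (hw₁.2.trans hw₂.2.symm)
      · have : l₂ ∈ S ∩ Branch T v l₂ := by rw [h3]; rfl
        rw [← hz₂l] at this
        exact hz₂L this.1.1
    · -- long second leg
      by_cases hsh₁ : Branch T v l₁ = {l₁}
      · -- first leg short: use condition (5)
        have hz₁l : z₁ = l₁ := by rw [hsh₁] at hz₁; exact hz₁
        have hd1 : T.dist v z₁ = 1 := by
          rw [hz₁l, T.dist_eq_one_iff_adj]; exact std₁.1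
        have hz₂l : z₂ = l₂ :=
          eq_of_dist_one_mem_branch hT std₂.1 hz₂ (by omega)
        rcases hS.2.2.2.2.2.2 ⟨l₁, ⟨std₁, hsh₁⟩, hS0⟩ l₂ ⟨std₂, hsh₂⟩ with h2 | h3
        · obtain ⟨w₁, w₂, hnw, hw₁, hw₂⟩ := solS2_pair h2
          exact ⟨w₁, w₂, hnw, hw₁, hw₂⟩
        · exfalso
          have : l₂ ∈ S ∩ Branch T v l₂ := by rw [h3]; rfl
          rw [← hz₂l] at this
          exact hz₂L this.1.1
      · -- both long: condition (4)
        have h2 : SolS2 T v l₂ S :=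
          hS.2.2.2.2.2.1 l₁ ⟨std₁, hsh₁⟩ hS0 l₂ ⟨std₂, hsh₂⟩ (Ne.symm hne)
        obtain ⟨w₁, w₂, hnw, hw₁, hw₂⟩ := solS2_pair h2
        exact ⟨w₁, w₂, hnw, hw₁, hw₂⟩
  · -- modified second leg: condition (3)
    have hnoM1 : ¬ SolM1 T v l₂ S := hS.2.2.2.2.1 ⟨l₁, std₁, hS0⟩ l₂ mod₂
    rcases hS.2.2.2.1 l₂ mod₂ with hm1 | hm2 | hm3
    · exact absurd hm1 hnoM1
    · obtain ⟨w₁, w₂, hnw, hw₁, hw₂⟩ := solM2_pair hm2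
      exact ⟨w₁, w₂, hnw, hw₁, hw₂⟩
    · obtain ⟨w₁, w₂, hnw, hw₁, hw₂⟩ := solM3_pair hm3
      exact ⟨w₁, w₂, hnw, hw₁, hw₂⟩

/-- Two landmarks in the union of the two branches containing a pair of equal-depth
non-landmarks. -/
lemma eq_depth_pair (hT : T.IsTree) {L : Set V} {v lx ly x y : V}
    (hS : IsLocalSet T v (L ∩ GLegVerts T v))
    (hgx : IsGLeg T v lx) (hgy : IsGLeg T v ly) (hne : lx ≠ ly)
    (hx : x ∈ Branch T v lx) (hy : y ∈ Branch T v ly)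
    (hxL : x ∉ L) (hyL : y ∉ L) (hd : T.dist v x = T.dist v y) :
    ∃ τ₁ τ₂, τ₁ ≠ τ₂ ∧ τ₁ ∈ L ∧ τ₂ ∈ L ∧
      (τ₁ ∈ Branch T v lx ∨ τ₁ ∈ Branch T v ly) ∧
      (τ₂ ∈ Branch T v lx ∨ τ₂ ∈ Branch T v ly) := by
  set S := L ∩ GLegVerts T v with hSdef
  have hadjx : T.Adj v lx := by rcases hgx with h | h; exacts [h.1, h.1]
  have hadjy : T.Adj v ly := by rcases hgy with h | h; exacts [h.1, h.1]
  have hnonempty : ∀ l : V, IsModifiedLeg T v l → (S ∩ Branch T v l).Nonempty := by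
    intro l hmod
    rcases hS.2.2.2.1 l hmod with hm1 | hm2 | hm3
    · exact solM1_nonempty hm1
    · obtain ⟨w, w', _, hw, _⟩ := solM2_pair hm2; exact ⟨w, hw⟩
    · obtain ⟨w, w', _, hw, _⟩ := solM3_pair hm3; exact ⟨w, hw⟩
  by_cases h₁ : (S ∩ Branch T v lx).Nonempty
  · by_cases h₂ : (S ∩ Branch T v ly).Nonempty
    · obtain ⟨τ₁, hτ₁⟩ := h₁
      obtain ⟨τ₂, hτ₂⟩ := h₂
      exact ⟨τ₁, τ₂, distinct_of_branches hT hadjx hadjy hne hτ₁.2 hτ₂.2,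
        hτ₁.1.1, hτ₂.1.1, Or.inl hτ₁.2, Or.inr hτ₂.2⟩
    · have hemp : S ∩ Branch T v ly = ∅ := Set.not_nonempty_iff_eq_empty.mp h₂
      have stdy : IsStandardLeg T v ly := by
        rcases hgy with h | h
        · exact h
        · exact absurd (hemp ▸ hnonempty ly h) (by simp)
      obtain ⟨τ₁, τ₂, hnw, hτ₁, hτ₂⟩ :=
        eq_depth_aux hT hS stdy hemp hgx (Ne.symm hne) hy hyL hx hxL hd.symm
      exact ⟨τ₁, τ₂, hnw, hτ₁.1.1, hτ₂.1.1, Or.inl hτ₁.2, Or.inl hτ₂.2⟩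
  · have hemp : S ∩ Branch T v lx = ∅ := Set.not_nonempty_iff_eq_empty.mp h₁
    have stdx : IsStandardLeg T v lx := by
      rcases hgx with h | h
      · exact h
      · exact absurd (hemp ▸ hnonempty lx h) (by simp)
    obtain ⟨τ₁, τ₂, hnw, hτ₁, hτ₂⟩ :=
      eq_depth_aux hT hS stdx hemp hgy hne hx hxL hy hyL hd
    exact ⟨τ₁, τ₂, hnw, hτ₁.1.1, hτ₂.1.1, Or.inr hτ₁.2, Or.inr hτ₂.2⟩

end SepAux

section ModAux

set_option linter.unusedSectionVars false
set_option linter.unusedVariables false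

open SimpleGraph Walk

variable {T : SimpleGraph V} [DecidableRel T.Adj]

/-- Two vertices at the same depth in a modified leg are the two vertices above the
small core, and the (m,2) solution separates them twice. -/
lemma mod_eq_depth (hT : T.IsTree) {L : Set V} {v l x y : V}
    (hS : IsLocalSet T v (L ∩ GLegVerts T v)) (hvdeg : 3 ≤ T.degree v)
    (hmod : IsModifiedLeg T v l) (hx : x ∈ Branch T v l) (hy : y ∈ Branch T v l)
    (hxy : x ≠ y) (hxL : x ∉ L) (hyL : y ∉ L) (hd : T.dist v x = T.dist v y) :
    HasTwoSeparators T L x y := by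
  obtain ⟨hadj, u, huB, husmall, huniq⟩ := hmod
  have hucore : IsCore T u := by unfold IsCore; rw [husmall.1]
  have hnc : ∀ a ∈ Branch T v l, T.dist v a < T.dist v u → T.degree a ≤ 2 := by
    intro a ha hda
    by_contra hdeg
    have hc : IsCore T a := by unfold IsCore; omega
    have := huniq a ha hc
    rw [this] at hda
    omega
  obtain ⟨β, γ, c₀, hbg, hshort, hstd, hc₀adj, hc₀v, hβc₀, hγc₀, hcompl⟩ :=
    small_core_legs hT hadj huB husmall hvdeg
  have hβB : β ∈ Branch T u β := self_mem_branch hT hshort.1.1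
  have hdeep : T.dist v u < T.dist v x := by
    rcases Nat.lt_or_ge (T.dist v u) (T.dist v x) with h | h
    · exact h
    · exact absurd (unique_at_depth hT hadj (T.dist v x)
        (fun a ha hda => hnc a ha (by omega)) x hx y hy rfl hd.symm) hxy
  obtain ⟨cx, hcxadj, hcxv, hxB', hxsplit⟩ := over_core hT hadj huB hnc hx hdeep
  obtain ⟨cy, hcyadj, hcyv, hyB', hysplit⟩ := over_core hT hadj huB hnc hy (hd ▸ hdeep)
  have hcx_mem : cx = β ∨ cx = γ := (hcompl cx hcxadj).resolve_left (fun h => hcxv (h ▸ hc₀v))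
  have hcy_mem : cy = β ∨ cy = γ := (hcompl cy hcyadj).resolve_left (fun h => hcyv (h ▸ hc₀v))
  have hcxy : cx ≠ cy := by
    intro h
    rw [← h] at hyB'
    apply hxy
    rcases hcx_mem with h1 | h1
    · rw [h1, hshort.2] at hxB' hyB'
      exact hxB'.trans hyB'.symm
    · rw [h1] at hxB' hyB'
      exact std_leg_unique_depth hT hstd hxB' hyB' (by omega)
  -- scenario: one of x, y is β and the other is γ
  have hscen : (x = β ∧ y = γ) ∨ (x = γ ∧ y = β) := by
    rcases hcx_mem with h1 | h1
    · have hcyγ : cy = γ := hcy_mem.resolve_left (fun h2 => hcxy (h1.trans h2.symm))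
      rw [h1, hshort.2] at hxB'
      have hxβ : x = β := hxB'
      rw [hcyγ] at hyB'
      have hdy1 : T.dist u y = 1 := by
        have : T.dist u x = 1 := by
          rw [hxβ, T.dist_eq_one_iff_adj]; exact hshort.1.1
        omega
      exact Or.inl ⟨hxβ, eq_of_dist_one_mem_branch hT hstd.1 hyB' hdy1⟩
    · have hcyβ : cy = β := hcy_mem.resolve_right (fun h2 => hcxy (h1.trans h2.symm))
      rw [hcyβ, hshort.2] at hyB'
      have hyβ : y = β := hyB'
      rw [h1] at hxB'
      have hdx1 : T.dist u x = 1 := by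
        have : T.dist u y = 1 := by
          rw [hyβ, T.dist_eq_one_iff_adj]; exact hshort.1.1
        omega
      exact Or.inr ⟨eq_of_dist_one_mem_branch hT hstd.1 hxB' hdx1, hyβ⟩
  -- use the solution of the modified leg
  set S := L ∩ GLegVerts T v with hSdef
  have habL : β ∉ L ∧ γ ∉ L := by
    rcases hscen with ⟨h1, h2⟩ | ⟨h1, h2⟩
    · exact ⟨h1 ▸ hxL, h2 ▸ hyL⟩
    · exact ⟨h2 ▸ hyL, h1 ▸ hxL⟩
  -- any vertex of the pair (a', b') is β or γ
  have hab_aux : ∀ w ∈ Branch T v l, T.dist v w = T.dist v u + 1 → w = β ∨ w = γ := by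
    intro w hw hdw
    obtain ⟨cw, hcwadj, hcwv, hwB', hwsplit⟩ :=
      over_core hT hadj huB hnc hw (by omega)
    have hdw1 : T.dist u w = 1 := by omega
    rcases (hcompl cw hcwadj).resolve_left (fun h => hcwv (h ▸ hc₀v)) with h1 | h1
    · left
      rw [h1, hshort.2] at hwB'
      exact hwB'
    · right
      rw [h1] at hwB'
      exact eq_of_dist_one_mem_branch hT hstd.1 hwB' hdw1
  rcases hS.2.2.2.1 l ⟨hadj, u, huB, husmall, huniq⟩ with hm1 | hm2 | hm3
  · -- (m,1): one of the two top vertices is a landmark, contradiction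
    exfalso
    obtain ⟨u', a', b', hpair, hset⟩ := hm1
    obtain ⟨hu'B, hu'small, hab, haB, hbB, hda, hdb, hbshort⟩ := hpair
    have hu'u : u' = u := huniq u' hu'B (by unfold IsCore; rw [hu'small.1])
    rw [hu'u] at hda hdb
    have hmem : ∃ t ∈ S, t = β ∨ t = γ := by
      rcases hset with hset | hset
      · have hmem' : a' ∈ S ∩ Branch T v l := by rw [hset]; rfl
        exact ⟨a', hmem'.1, hab_aux a' haB hda⟩
      · have hmem' : b' ∈ S ∩ Branch T v l := by rw [hset]; rfl
        exact ⟨b', hmem'.1, hab_aux b' hbB hdb⟩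
    obtain ⟨t, htS, ht⟩ := hmem
    rcases ht with rfl | rfl
    · exact habL.1 htS.1
    · exact habL.2 htS.1
  · -- (m,2): the two deep vertices separate x and y
    obtain ⟨u', a', b', hpair, haS, hbS, ⟨w₁, hw₁, w₂, hw₂, hww, hdw₁, hdw₂⟩, hno⟩ := hm2
    obtain ⟨hu'B, hu'small, hab, haB, hbB, hda, hdb, hbshort⟩ := hpair
    have hu'u : u' = u := huniq u' hu'B (by unfold IsCore; rw [hu'small.1])
    rw [hu'u] at hdw₁ hdw₂
    have hsep : ∀ w ∈ S ∩ Branch T v l, T.dist v u + 2 ≤ T.dist v w →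
        T.dist w x ≠ T.dist w y := by
      intro w hw hdw
      obtain ⟨cw, hcwadj, hcwv, hwB', hwsplit⟩ :=
        over_core hT hadj huB hnc hw.2 (by omega)
      have hdwu : 2 ≤ T.dist u w := by omega
      have hwγ : w ∈ Branch T u γ := by
        rcases (hcompl cw hcwadj).resolve_left (fun h => hcwv (h ▸ hc₀v)) with h1 | h1
        · exfalso
          rw [h1, hshort.2] at hwB'
          have : w = β := hwB'
          rw [this] at hdwu
          have : T.dist u β = 1 := by rw [T.dist_eq_one_iff_adj]; exact hshort.1.1
          omega
        · rw [h1] at hwB'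
          exact hwB'
      have hβγ : β ∉ Branch T u γ := branch_disjoint hT hshort.1.1 hstd.1 hbg hβB
      have hγB : γ ∈ Branch T u γ := self_mem_branch hT hstd.1
      have hduγ : T.dist u γ = 1 := by rw [T.dist_eq_one_iff_adj]; exact hstd.1
      have hduβ : T.dist u β = 1 := by rw [T.dist_eq_one_iff_adj]; exact hshort.1.1
      have hsepβγ : T.dist w β ≠ T.dist w γ := by
        have h1 : T.dist β w = T.dist β u + T.dist u w :=
          dist_of_notMem_branch hT hstd.1 hβγ hwγ
        have h2 : T.dist u γ + T.dist γ w = T.dist u w := std_leg_dist hT hstd hγB hwγ (by omega)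
        have e1 : T.dist β w = T.dist w β := T.dist_comm
        have e2 : T.dist β u = T.dist u β := T.dist_comm
        have e3 : T.dist γ w = T.dist w γ := T.dist_comm
        omega
      rcases hscen with ⟨h1, h2⟩ | ⟨h1, h2⟩
      · rw [h1, h2]; exact hsepβγ
      · rw [h1, h2]; exact hsepβγ.symm
    refine ⟨w₁, hw₁.1.1, w₂, hw₂.1.1, hww, ?_, ?_⟩
    · exact hsep w₁ hw₁ hdw₁
    · exact hsep w₂ hw₂ hdw₂
  · -- (m,3): again a top vertex is a landmark, contradiction
    exfalso
    obtain ⟨u', a', b', hpair, hpairs, habS⟩ := hm3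
    obtain ⟨hu'B, hu'small, hab, haB, hbB, hda, hdb, hbshort⟩ := hpair
    have hu'u : u' = u := huniq u' hu'B (by unfold IsCore; rw [hu'small.1])
    rw [hu'u] at hda hdb
    have hmem : ∃ t ∈ S, t = β ∨ t = γ := by
      rcases habS with hset | hset
      · exact ⟨a', hset, hab_aux a' haB hda⟩
      · exact ⟨b', hset, hab_aux b' hbB hdb⟩
    obtain ⟨t, htS, ht⟩ := hmem
    rcases ht with rfl | rfl
    · exact habL.1 htS.1
    · exact habL.2 htS.1

end ModAux

/-- in a tree with at least two regular cores, if the restriction of `L`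
to the g-legs of every regular core is a local set, then every pair of distinct
vertices outside `L` in the subtree consisting of a regular core `v` and its g-legs
has at least two separators in `L`. -/
theorem local_sets_separate_within_subtree
    (T : SimpleGraph V) [DecidableRel T.Adj] (hT : T.IsTree)
    (hcores : ∃ v w : V, v ≠ w ∧ IsRegularCore T v ∧ IsRegularCore T w)
    (L : Set V)
    (hloc : ∀ v : V, IsRegularCore T v → IsLocalSet T v (L ∩ GLegVerts T v)) :
    ∀ v : V, IsRegularCore T v → ∀ x y : V,
      x ∈ insert v (GLegVerts T v) → y ∈ insert v (GLegVerts T v) →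
      x ≠ y → x ∉ L → y ∉ L → HasTwoSeparators T L x y := by
  have main : ∀ v : V, IsRegularCore T v → ∀ x y : V,
      x ∈ insert v (GLegVerts T v) → y ∈ insert v (GLegVerts T v) →
      x ≠ y → x ∉ L → y ∉ L → T.dist v x ≤ T.dist v y →
      HasTwoSeparators T L x y := by
    intro v hv x y hx hy hxy hxL hyL hdxy
    have hyv : y ≠ v := by
      intro h
      rw [h, T.dist_self, Nat.le_zero] at hdxy
      have hxv : v = x := (hT.isConnected.dist_eq_zero_iff).mp hdxy
      exact hxy (hxv.symm.trans h.symm)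
    have hyG : y ∈ GLegVerts T v := by
      rcases Set.mem_insert_iff.mp hy with h | h
      · exact absurd h hyv
      · exact h
    obtain ⟨ly, hgy, hyB⟩ := hyG
    have hadjy : T.Adj v ly := by rcases hgy with h | h; exacts [h.1, h.1]
    by_cases hxB : x ∈ Branch T v ly
    · -- x and y in the same branch
      by_cases hdeq : T.dist v x = T.dist v y
      · rcases hgy with hstd | hmod
        · exact absurd (std_leg_unique_depth hT hstd hxB hyB hdeq) hxy
        · exact mod_eq_depth hT (hloc v hv) hv.1 hmod hxB hyB hxy hxL hyL hdeq
      · obtain ⟨τ₁, τ₂, hne, ⟨c₁, ha₁, hn₁, hτ₁⟩, ⟨c₂, ha₂, hn₂, hτ₂⟩⟩ :=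
          key_two hT hloc hv ly
        refine ⟨τ₁, hτ₁.1, τ₂, hτ₂.1, hne, ?_, ?_⟩
        · exact sep_out_branch hT hadjy
            (branch_disjoint hT ha₁ hadjy hn₁ hτ₁.2) hxB hyB hdeq
        · exact sep_out_branch hT hadjy
            (branch_disjoint hT ha₂ hadjy hn₂ hτ₂.2) hxB hyB hdeq
    · -- x outside the branch of y
      rcases lt_or_eq_of_le hdxy with hdlt | hdeq
      · obtain ⟨τ₁, τ₂, hne, ⟨c₁, ha₁, hn₁, hτ₁⟩, ⟨c₂, ha₂, hn₂, hτ₂⟩⟩ :=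
          key_two hT hloc hv ly
        refine ⟨τ₁, hτ₁.1, τ₂, hτ₂.1, hne, ?_, ?_⟩
        · exact sep_out_lt hT hadjy ha₁ hn₁ hτ₁.2 hyB hdlt
        · exact sep_out_lt hT hadjy ha₂ hn₂ hτ₂.2 hyB hdlt
      · -- equal depths, different branches
        have hxv : x ≠ v := by
          intro h
          rw [h, T.dist_self] at hdeq
          have h0 : T.dist v y = 0 := hdeq.symm
          exact hyv ((hT.isConnected.dist_eq_zero_iff).mp h0).symm
        have hxG : x ∈ GLegVerts T v := by
          rcases Set.mem_insert_iff.mp hx with h | h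
          · exact absurd h hxv
          · exact h
        obtain ⟨lx, hgx, hxBx⟩ := hxG
        have hadjx : T.Adj v lx := by rcases hgx with h | h; exacts [h.1, h.1]
        have hlxy : lx ≠ ly := by
          intro h
          rw [h] at hxBx
          exact hxB hxBx
        obtain ⟨τ₁, τ₂, hne, hτ₁L, hτ₂L, hτ₁m, hτ₂m⟩ :=
          eq_depth_pair hT (hloc v hv) hgx hgy hlxy hxBx hyB hxL hyL hdeq
        refine ⟨τ₁, hτ₁L, τ₂, hτ₂L, hne, ?_, ?_⟩
        · rcases hτ₁m with hm | hm
          · exact sep_in_branch hT hadjx hadjy hlxy hm hxBx hyB (by omega)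
          · exact (sep_in_branch hT hadjy hadjx (Ne.symm hlxy) hm hyB hxBx (by omega)).symm
        · rcases hτ₂m with hm | hm
          · exact sep_in_branch hT hadjx hadjy hlxy hm hxBx hyB (by omega)
          · exact (sep_in_branch hT hadjy hadjx (Ne.symm hlxy) hm hyB hxBx (by omega)).symm
  intro v hv x y hx hy hxy hxL hyL
  rcases le_total (T.dist v x) (T.dist v y) with h | h
  · exact main v hv x y hx hy hxy hxL hyL h
  · obtain ⟨τ₁, h₁, τ₂, h₂, hne, hs₁, hs₂⟩ :=
      main v hv y x hy hx (Ne.symm hxy) hyL hxL h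
    exact ⟨τ₁, h₁, τ₂, h₂, hne, hs₁.symm, hs₂.symm⟩
end

section
/- Let T be a tree with at least two regular cores, and let L ⊆ V be a set such that for every regular core v of T, the subset of L restricted to the vertices of the g-legs of v is a local set for v. Then L is a landmark set of T. -/
open SimpleGraph

variable {V : Type*} [Fintype V] [DecidableEq V]

namespace TreeProof

variable {T : SimpleGraph V}
set_option linter.unusedSectionVars false

/-- In a tree, every path realizes the distance. -/
lemma path_length_eq (hT : T.IsTree) {u v : V} (p : T.Walk u v) (hp : p.IsPath) :
    p.length = T.dist u v := by
  obtain ⟨q, hq, hql⟩ := hT.isConnected.exists_path_of_dist u v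
  have : (⟨p, hp⟩ : T.Path u v) = ⟨q, hq⟩ := hT.IsAcyclic.path_unique _ _
  have : p = q := congrArg Subtype.val this
  rw [this, hql]

lemma adj_dist_ne (hT : T.IsTree) {x y : V} (hxy : T.Adj x y) (w : V) :
    T.dist w x ≠ T.dist w y := by
  intro heq
  by_cases hwx : w = x
  · subst hwx
    rw [SimpleGraph.dist_self] at heq
    exact hxy.ne (hT.isConnected.dist_eq_zero_iff.mp heq.symm)
  obtain ⟨p, hp, hpl⟩ := hT.isConnected.exists_path_of_dist w x
  by_cases hy : y ∈ p.support
  · -- then dist w x = dist w y + dist y x, with dist y x = 1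
    have ht := hp.takeUntil hy
    have hd := hp.dropUntil hy
    have htl : (p.takeUntil y hy).length = T.dist w y := path_length_eq hT _ ht
    have hdl : (p.dropUntil y hy).length = T.dist y x := path_length_eq hT _ hd
    have hyx : T.dist y x = 1 := dist_eq_one_iff_adj.mpr hxy.symm
    have hsum : (p.takeUntil y hy).length + (p.dropUntil y hy).length = p.length := by
      rw [← Walk.length_append, Walk.take_spec]
    omega
  · -- p.concat (x~y) is a path w→y of length dist w x + 1
    have hrev : (Walk.cons hxy.symm p.reverse).IsPath :=
      hp.reverse.cons (by simpa using hy)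
    have hconc : (p.concat hxy).IsPath := by
      have h2 : (p.concat hxy).reverse = Walk.cons hxy.symm p.reverse := by
        simp [Walk.concat_eq_append]
      have := hrev.reverse
      rwa [← h2, Walk.reverse_reverse] at this
    have := path_length_eq hT _ hconc
    rw [Walk.length_concat] at this
    omega

/-- F1: distances to the endpoints of an edge differ by exactly one. -/
lemma adj_dist (hT : T.IsTree) {x y : V} (hxy : T.Adj x y) (w : V) :
    T.dist w y = T.dist w x + 1 ∨ T.dist w x = T.dist w y + 1 := by
  have h1 : T.dist w y ≤ T.dist w x + 1 := by
    have := hT.isConnected.dist_triangle (u := w) (v := x) (w := y)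
    have hxy1 : T.dist x y = 1 := dist_eq_one_iff_adj.mpr hxy
    omega
  have h2 : T.dist w x ≤ T.dist w y + 1 := by
    have := hT.isConnected.dist_triangle (u := w) (v := y) (w := x)
    have hxy1 : T.dist y x = 1 := dist_eq_one_iff_adj.mpr hxy.symm
    omega
  have h3 := adj_dist_ne hT hxy w
  omega

/-- F2 existence: a neighbour towards `w`. -/
lemma exists_towards (hT : T.IsTree) {v w : V} (hne : v ≠ w) :
    ∃ x, T.Adj v x ∧ T.dist v w = T.dist x w + 1 := by
  obtain ⟨p, hp, hpl⟩ := hT.isConnected.exists_path_of_dist v w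
  cases p with
  | nil => exact absurd rfl hne
  | cons h q =>
      refine ⟨_, h, ?_⟩
      have := path_length_eq hT q hp.of_cons
      rw [Walk.length_cons] at hpl
      omega

/-- F2 uniqueness. -/
lemma towards_unique (hT : T.IsTree) {v w x x' : V}
    (hx : T.Adj v x) (hdx : T.dist v w = T.dist x w + 1)
    (hx' : T.Adj v x') (hdx' : T.dist v w = T.dist x' w + 1) : x = x' := by
  -- build two paths v→w starting with x resp. x'
  have build : ∀ (z : V), T.Adj v z → T.dist v w = T.dist z w + 1 →
      ∃ (p : T.Walk v w), p.IsPath ∧ p.getVert 1 = z := by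
    intro z hz hdz
    obtain ⟨q, hq, hql⟩ := hT.isConnected.exists_path_of_dist z w
    have hv : v ∉ q.support := by
      intro hv
      have ht := hq.takeUntil hv
      have htl : (q.takeUntil v hv).length = T.dist z v := path_length_eq hT _ ht
      have hdd := hq.dropUntil hv
      have hdl : (q.dropUntil v hv).length = T.dist v w := path_length_eq hT _ hdd
      have hsum : (q.takeUntil v hv).length + (q.dropUntil v hv).length = q.length := by
        rw [← Walk.length_append, Walk.take_spec]
      have hzv : T.dist z v = 1 := dist_eq_one_iff_adj.mpr hz.symm
      omega
    refine ⟨Walk.cons hz q, hq.cons hv, ?_⟩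
    rw [Walk.getVert_cons q hz one_ne_zero]
    cases q with
    | nil => simp [Walk.getVert]
    | cons h' q' => simp [Walk.getVert]
  obtain ⟨p, hp, hp1⟩ := build x hx hdx
  obtain ⟨p', hp', hp1'⟩ := build x' hx' hdx'
  have : (⟨p, hp⟩ : T.Path v w) = ⟨p', hp'⟩ := hT.IsAcyclic.path_unique _ _
  have hpp : p = p' := congrArg Subtype.val this
  rw [← hp1, ← hp1', hpp]

/-- Helper ray lemma: if the step from `b` towards `c` moves away from `a`,
then `b` lies on the geodesic from `a` to `c`. -/
lemma ray_lemma (hT : T.IsTree) :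
    ∀ n {a b b₁ c : V}, T.dist b₁ c = n → T.Adj b b₁ →
    T.dist a b₁ = T.dist a b + 1 → T.dist b c = T.dist b₁ c + 1 →
    T.dist a c = T.dist a b + T.dist b c := by
  intro n
  induction n with
  | zero =>
      intro a b b₁ c h0 hadj ha hb
      have : b₁ = c := hT.isConnected.dist_eq_zero_iff.mp h0
      subst this
      omega
  | succ n ih =>
      intro a b b₁ c h0 hadj ha hb
      have hb₁c : b₁ ≠ c := by
        intro h; subst h; rw [SimpleGraph.dist_self] at h0; omega
      obtain ⟨b₂, hb₂adj, hb₂⟩ := exists_towards hT hb₁c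
      have hcases := adj_dist hT hb₂adj a
      rcases hcases with h | h
      · -- dist a b₂ = dist a b₁ + 1 : recurse
        have := ih (a := a) (b := b₁) (b₁ := b₂) (c := c) (by omega) hb₂adj (by omega) (by omega)
        omega
      · -- dist a b₁ = dist a b₂ + 1 : then b₂ and b are both towards a from b₁
        exfalso
        have hne : b₁ ≠ a := by
          intro hh; subst hh; rw [SimpleGraph.dist_self] at ha; omega
        have h1 : T.dist b₁ a = T.dist b₂ a + 1 := by
          rw [dist_comm, dist_comm (u := b₂)]; omega
        have h2 : T.dist b₁ a = T.dist b a + 1 := by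
          rw [dist_comm, dist_comm (u := b)]; omega
        have := towards_unique hT hb₂adj h1 hadj.symm h2
        subst this
        omega

/-- Median (Steiner point) of three vertices in a tree. -/
lemma median (hT : T.IsTree) :
    ∀ n (a b c : V), T.dist b c = n →
    ∃ q, T.dist a b = T.dist a q + T.dist q b ∧ T.dist a c = T.dist a q + T.dist q c ∧
      T.dist b c = T.dist b q + T.dist q c := by
  intro n
  induction n using Nat.strong_induction_on with
  | _ n ih =>
  intro a b c hn
  by_cases h1 : T.dist b c = T.dist b a + T.dist a c
  · exact ⟨a, by simp [SimpleGraph.dist_self], by simp [SimpleGraph.dist_self], h1⟩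
  by_cases h2 : T.dist a b = T.dist a c + T.dist c b
  · refine ⟨c, h2, by simp [SimpleGraph.dist_self], by simp [SimpleGraph.dist_self]⟩
  by_cases h3 : T.dist a c = T.dist a b + T.dist b c
  · refine ⟨b, by simp [SimpleGraph.dist_self], h3, by simp [SimpleGraph.dist_self]⟩
  -- all strict
  have hbc : b ≠ c := by
    intro h; subst h; rw [SimpleGraph.dist_self] at h2; rw [dist_comm] at h2; omega
  obtain ⟨b₁, hb₁adj, hb₁⟩ := exists_towards hT hbc
  have hab₁ : T.dist a b₁ + 1 = T.dist a b ∨ T.dist a b₁ = T.dist a b + 1 := by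
    have := adj_dist hT hb₁adj a; omega
  rcases hab₁ with h | h
  · -- recurse on (a, b₁, c)
    obtain ⟨q, hq1, hq2, hq3⟩ := ih (T.dist b₁ c) (by omega) a b₁ c rfl
    have c1 : T.dist b₁ q = T.dist q b₁ := dist_comm
    have c2 : T.dist b q = T.dist q b := dist_comm
    have hadj1 : T.dist b b₁ = 1 := dist_eq_one_iff_adj.mpr hb₁adj
    have ht1 : T.dist b q ≤ T.dist b b₁ + T.dist b₁ q := hT.isConnected.dist_triangle
    have ht2 : T.dist b c ≤ T.dist b q + T.dist q c := hT.isConnected.dist_triangle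
    exact ⟨q, by omega, by omega, by omega⟩
  · -- ray lemma: dist a c = dist a b + dist b c, contradiction with h3
    exfalso
    exact h3 (ray_lemma hT (T.dist b₁ c) rfl hb₁adj h (by omega))

/-- Convenient version of median. -/
lemma median' (hT : T.IsTree) (a b c : V) :
    ∃ q, T.dist a b = T.dist a q + T.dist q b ∧ T.dist a c = T.dist a q + T.dist q c ∧
      T.dist b c = T.dist b q + T.dist q c :=
  median hT _ a b c rfl

/- Branch membership lemmas -/

lemma mem_branch_self (hT : T.IsTree) {v x : V} (h : T.Adj v x) : x ∈ Branch T v x := by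
  show T.dist v x = T.dist x x + 1
  rw [SimpleGraph.dist_self, dist_eq_one_iff_adj.mpr h]

lemma notMem_branch_self (hT : T.IsTree) (v x : V) : v ∉ Branch T v x := by
  intro h
  replace h : T.dist v v = T.dist x v + 1 := h
  rw [SimpleGraph.dist_self] at h; omega

lemma branch_dist_pos (hT : T.IsTree) {v x w : V} (h : w ∈ Branch T v x) :
    T.dist x w + 1 = T.dist v w ∧ 1 ≤ T.dist v w := by
  replace h : T.dist v w = T.dist x w + 1 := h
  omega

lemma mem_branch_ne (hT : T.IsTree) {v x w : V} (h : w ∈ Branch T v x) : w ≠ v := by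
  intro hh; subst hh; exact notMem_branch_self hT w x h

/-- Every vertex other than `v` lies in the branch of a unique neighbour. -/
lemma exists_branch (hT : T.IsTree) {v w : V} (hne : w ≠ v) :
    ∃ x, T.Adj v x ∧ w ∈ Branch T v x := by
  obtain ⟨x, hadj, hd⟩ := exists_towards hT (Ne.symm hne)
  exact ⟨x, hadj, hd⟩

lemma branch_unique (hT : T.IsTree) {v x y w : V} (hx : T.Adj v x) (hy : T.Adj v y)
    (hwx : w ∈ Branch T v x) (hwy : w ∈ Branch T v y) : x = y :=
  towards_unique hT hx hwx hy hwy

/-- Depth-one vertex of a branch is the root neighbour. -/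
lemma branch_depth_one (hT : T.IsTree) {v x w : V} (hw : w ∈ Branch T v x)
    (hd : T.dist v w = 1) : w = x := by
  replace hw : T.dist v w = T.dist x w + 1 := hw
  have : T.dist x w = 0 := by omega
  exact (hT.isConnected.dist_eq_zero_iff.mp this).symm

/-- L4b: distance through a vertex, when on opposite sides. -/
lemma dist_add_of_notMem_branch (hT : T.IsTree) {v y τ w : V} (hady : T.Adj v y)
    (hτ : τ ∈ Branch T v y) (hw : w ∉ Branch T v y) :
    T.dist τ w = T.dist τ v + T.dist v w := by
  obtain ⟨q, hq1, hq2, hq3⟩ := median' hT v τ w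
  by_cases hqv : q = v
  · subst hqv; exact hq3
  obtain ⟨z, hzadj, hzq⟩ := exists_branch hT hqv
  replace hzq : T.dist v q = T.dist z q + 1 := hzq
  have hτz : τ ∈ Branch T v z := by
    show T.dist v τ = T.dist z τ + 1
    have ht1 : T.dist z τ ≤ T.dist z q + T.dist q τ := hT.isConnected.dist_triangle
    have ht2 : T.dist v τ ≤ 1 + T.dist z τ := by
      have := hT.isConnected.dist_triangle (u := v) (v := z) (w := τ)
      have : T.dist v z = 1 := dist_eq_one_iff_adj.mpr hzadj
      omega
    omega
  have hwz : w ∈ Branch T v z := by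
    show T.dist v w = T.dist z w + 1
    have ht1 : T.dist z w ≤ T.dist z q + T.dist q w := hT.isConnected.dist_triangle
    have ht2 : T.dist v w ≤ 1 + T.dist z w := by
      have := hT.isConnected.dist_triangle (u := v) (v := z) (w := w)
      have : T.dist v z = 1 := dist_eq_one_iff_adj.mpr hzadj
      omega
    omega
  have := branch_unique hT hzadj hady hτz hτ
  subst this
  exact absurd hwz hw

/-- Two vertices in the same branch: strict saving through the neighbour. -/
lemma same_branch_dist (hT : T.IsTree) {v x τ u : V} (hτ : τ ∈ Branch T v x)
    (hu : u ∈ Branch T v x) : T.dist τ u + 2 ≤ T.dist τ v + T.dist v u := by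
  replace hτ : T.dist v τ = T.dist x τ + 1 := hτ
  replace hu : T.dist v u = T.dist x u + 1 := hu
  have ht : T.dist τ u ≤ T.dist τ x + T.dist x u := hT.isConnected.dist_triangle
  rw [dist_comm (u := τ) (v := x)] at ht
  rw [dist_comm (u := τ) (v := v)]
  omega

/-- Disjointness of distinct branches. -/
lemma branch_disjoint (hT : T.IsTree) {v x y w : V} (hx : T.Adj v x) (hy : T.Adj v y)
    (hxy : x ≠ y) (hwx : w ∈ Branch T v x) : w ∉ Branch T v y := by
  intro hwy
  exact hxy (branch_unique hT hx hy hwx hwy)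

/- Parity -/

lemma walk_parity (hT : T.IsTree) (r₀ : V) {a b : V} (p : T.Walk a b) :
    (T.dist r₀ a + T.dist r₀ b + p.length) % 2 = 0 := by
  induction p with
  | nil => simp; omega
  | cons h p ih =>
      rename_i u v w
      have := adj_dist hT h r₀
      rw [Walk.length_cons]
      omega

lemma dist_parity (hT : T.IsTree) (r₀ a b : V) :
    (T.dist r₀ a + T.dist r₀ b + T.dist a b) % 2 = 0 := by
  obtain ⟨p, hp, hpl⟩ := hT.isConnected.exists_path_of_dist a b
  have := walk_parity hT r₀ p
  omega

/-- If `dist u w` is odd, every vertex separates `u` and `w`. -/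
lemma odd_dist_separates (hT : T.IsTree) {u w : V} (hodd : T.dist u w % 2 = 1) (τ : V) :
    T.dist τ u ≠ T.dist τ w := by
  have h1 := dist_parity hT τ u w
  intro h
  omega

/-- Midpoint existence. -/
lemma exists_between (hT : T.IsTree) (u w : V) :
    ∀ k, k ≤ T.dist u w → ∃ m, T.dist u m = k ∧ T.dist m w + k = T.dist u w := by
  intro k
  induction k with
  | zero => intro _; exact ⟨u, SimpleGraph.dist_self, by omega⟩
  | succ k ih =>
      intro hk
      obtain ⟨m, hm1, hm2⟩ := ih (by omega)
      have hmw : m ≠ w := by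
        intro h; subst h; rw [SimpleGraph.dist_self] at hm2; omega
      obtain ⟨m', hadj, hm'⟩ := exists_towards hT hmw
      refine ⟨m', ?_, by omega⟩
      have ht1 : T.dist u m' ≤ T.dist u m + 1 := by
        have := hT.isConnected.dist_triangle (u := u) (v := m) (w := m')
        have : T.dist m m' = 1 := dist_eq_one_iff_adj.mpr hadj
        omega
      have ht2 : T.dist u w ≤ T.dist u m' + T.dist m' w := hT.isConnected.dist_triangle
      omega



section Structural

variable [DecidableRel T.Adj]

lemma dist_adj_le (hT : T.IsTree) {a b : V} (h : T.Adj a b) (z : V) :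
    T.dist a z ≤ T.dist b z + 1 := by
  have h1 : T.dist a z ≤ T.dist a b + T.dist b z := hT.isConnected.dist_triangle
  have h2 : T.dist a b = 1 := dist_eq_one_iff_adj.mpr h
  omega

/-- A vertex in a branch of `r` away from the branch of `m` is farther from `m`,
and stays in `m`'s branch containing `r`. -/
lemma branch_nested (hT : T.IsTree) {m x₀ r s z : V} (hx₀ : T.Adj m x₀)
    (hr : r ∈ Branch T m x₀) (hs : T.Adj r s) (hzs : z ∈ Branch T r s)
    (hms : m ∉ Branch T r s) :
    z ∈ Branch T m x₀ ∧ T.dist m z = T.dist m r + T.dist r z := by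
  have hdist : T.dist m z = T.dist m r + T.dist r z := by
    have hrm : r ≠ m := mem_branch_ne hT hr
    obtain ⟨y, hyadj, hmy⟩ := exists_branch hT (Ne.symm hrm)
    have hsy : s ≠ y := by
      rintro rfl
      exact hms hmy
    exact dist_add_of_notMem_branch hT hyadj hmy (branch_disjoint hT hs hyadj hsy hzs)
  refine ⟨?_, hdist⟩
  show T.dist m z = T.dist x₀ z + 1
  replace hr : T.dist m r = T.dist x₀ r + 1 := hr
  have h1 : T.dist x₀ z ≤ T.dist x₀ r + T.dist r z := hT.isConnected.dist_triangle
  have h2 : T.dist m z ≤ T.dist x₀ z + 1 := dist_adj_le hT hx₀ z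
  omega

lemma small_of_not_regular {q : V} (h3 : IsCore T q) (h : ¬ IsRegularCore T q) :
    IsSmallCore T q := by
  by_contra hs; exact h ⟨h3, hs⟩

/-- A small core cannot have two distinct branches each containing a vertex of degree ≥ 3. -/
lemma small_no_two_core_branches (hT : T.IsTree) {q : V} (hq : IsSmallCore T q)
    {t1 t2 c1 c2 : V} (h1 : T.Adj q t1) (h2 : T.Adj q t2) (hne : t1 ≠ t2)
    (hc1 : c1 ∈ Branch T q t1) (hd1 : 3 ≤ T.degree c1)
    (hc2 : c2 ∈ Branch T q t2) (hd2 : 3 ≤ T.degree c2) : False := by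
  obtain ⟨hdeg, x, y, hxy, hxshort, hystd⟩ := hq
  have hxadj : T.Adj q x := hxshort.1.1
  have hyadj : T.Adj q y := hystd.1
  -- t1, t2 are not legs
  have hleg : ∀ t c, T.Adj q t → c ∈ Branch T q t → 3 ≤ T.degree c → t ≠ x ∧ t ≠ y := by
    intro t c hadj hc hdc
    constructor
    · rintro rfl
      exact absurd (hxshort.1.2 c hc) (by omega)
    · rintro rfl
      exact absurd (hystd.2 c hc) (by omega)
  obtain ⟨h1x, h1y⟩ := hleg t1 c1 h1 hc1 hd1
  obtain ⟨h2x, h2y⟩ := hleg t2 c2 h2 hc2 hd2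
  -- four distinct neighbours contradict degree 3
  have hsub : ({x, y, t1, t2} : Finset V) ⊆ T.neighborFinset q := by
    intro z hz
    simp only [Finset.mem_insert, Finset.mem_singleton] at hz
    rcases hz with rfl | rfl | rfl | rfl <;>
      simp [SimpleGraph.mem_neighborFinset, hxadj, hyadj, h1, h2]
  have hcard : ({x, y, t1, t2} : Finset V).card = 4 := by
    rw [Finset.card_insert_of_notMem (by simp [hxy, h1x.symm, h2x.symm, Ne.symm]),
        Finset.card_insert_of_notMem (by simp [h1y.symm, h2y.symm, Ne.symm]),
        Finset.card_insert_of_notMem (by simp [hne]),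
        Finset.card_singleton]
  have := Finset.card_le_card hsub
  rw [hcard] at this
  have : T.degree q = (T.neighborFinset q).card := rfl
  omega

/-- A median of three pairwise "separated" vertices has three distinct branches. -/
lemma junction (hT : T.IsTree) {q a b c : V}
    (hab : T.dist a b = T.dist a q + T.dist q b)
    (hac : T.dist a c = T.dist a q + T.dist q c)
    (hbc : T.dist b c = T.dist b q + T.dist q c)
    (hqa : q ≠ a) (hqb : q ≠ b) (hqc : q ≠ c) :
    ∃ ta tb tc, T.Adj q ta ∧ T.Adj q tb ∧ T.Adj q tc ∧ ta ≠ tb ∧ ta ≠ tc ∧ tb ≠ tc ∧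
      a ∈ Branch T q ta ∧ b ∈ Branch T q tb ∧ c ∈ Branch T q tc := by
  obtain ⟨ta, hta, haA⟩ := exists_branch hT (Ne.symm hqa)
  obtain ⟨tb, htb, hbB⟩ := exists_branch hT (Ne.symm hqb)
  obtain ⟨tc, htc, hcC⟩ := exists_branch hT (Ne.symm hqc)
  refine ⟨ta, tb, tc, hta, htb, htc, ?_, ?_, ?_, haA, hbB, hcC⟩
  · rintro rfl
    have := same_branch_dist hT haA hbB
    omega
  · rintro rfl
    have := same_branch_dist hT haA hcC
    omega
  · rintro rfl
    have := same_branch_dist hT hbB hcC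
    omega

lemma degree_ge_three_of_junction (hT : T.IsTree) {q ta tb tc : V}
    (hta : T.Adj q ta) (htb : T.Adj q tb) (htc : T.Adj q tc)
    (h1 : ta ≠ tb) (h2 : ta ≠ tc) (h3 : tb ≠ tc) : 3 ≤ T.degree q := by
  have hsub : ({ta, tb, tc} : Finset V) ⊆ T.neighborFinset q := by
    intro z hz
    simp only [Finset.mem_insert, Finset.mem_singleton] at hz
    rcases hz with rfl | rfl | rfl <;> simp [SimpleGraph.mem_neighborFinset, hta, htb, htc]
  have hcard : ({ta, tb, tc} : Finset V).card = 3 := by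
    rw [Finset.card_insert_of_notMem (by simp [h1, h2]),
        Finset.card_insert_of_notMem (by simp [h3]), Finset.card_singleton]
  have := Finset.card_le_card hsub
  rw [hcard] at this
  exact this

/-- A core which is not regular, sitting "between" two cores, is impossible. -/
lemma core_between_cores (hT : T.IsTree) {q : V} (hnr : ¬ IsRegularCore T q)
    (hdeg : 3 ≤ T.degree q) {ta tb c1 c2 : V} (hta : T.Adj q ta) (htb : T.Adj q tb)
    (hne : ta ≠ tb) (h1 : c1 ∈ Branch T q ta) (hd1 : 3 ≤ T.degree c1)
    (h2 : c2 ∈ Branch T q tb) (hd2 : 3 ≤ T.degree c2) : False :=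
  small_no_two_core_branches hT (small_of_not_regular hdeg hnr) hta htb hne h1 hd1 h2 hd2

/-- L6: a vertex on the geodesic to a member of a branch is in the branch. -/
lemma mem_branch_of_on_geodesic (hT : T.IsTree) {r s f q : V} (hs : T.Adj r s)
    (hf : f ∈ Branch T r s) (hq : q ≠ r)
    (hgeo : T.dist r f = T.dist r q + T.dist q f) : q ∈ Branch T r s := by
  obtain ⟨z, hzadj, hqz⟩ := exists_branch hT hq
  have hfz : f ∈ Branch T r z := by
    show T.dist r f = T.dist z f + 1
    replace hqz : T.dist r q = T.dist z q + 1 := hqz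
    have h1 : T.dist z f ≤ T.dist z q + T.dist q f := hT.isConnected.dist_triangle
    have h2 : T.dist r f ≤ T.dist z f + 1 := dist_adj_le hT hzadj f
    omega
  have := branch_unique hT hzadj hs hfz hf
  subst this
  exact hqz

/-- T0: a branch of a core containing no regular core is a g-leg. -/
lemma branch_gleg (hT : T.IsTree) {r s : V} (hr : 3 ≤ T.degree r) (hs : T.Adj r s)
    (hnoreg : ∀ z ∈ Branch T r s, ¬ IsRegularCore T z) : IsGLeg T r s := by
  classical
  by_cases hcore : ∃ z, z ∈ Branch T r s ∧ 3 ≤ T.degree z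
  · right
    -- pick a deepest core f
    set C := Finset.univ.filter (fun z => z ∈ Branch T r s ∧ 3 ≤ T.degree z) with hC
    have hCne : C.Nonempty := by
      obtain ⟨z, hz⟩ := hcore
      exact ⟨z, by simp [hC, hz.1, hz.2]⟩
    obtain ⟨f, hfC, hfmax⟩ := C.exists_max_image (fun z => T.dist r z) hCne
    rw [hC, Finset.mem_filter] at hfC
    obtain ⟨-, hfB, hfdeg⟩ := hfC
    have hfsmall : IsSmallCore T f := small_of_not_regular hfdeg (hnoreg f hfB)
    refine ⟨hs, f, hfB, hfsmall, ?_⟩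
    intro g hgB hgcore
    by_contra hgf
    obtain ⟨q, hq1, hq2, hq3⟩ := median' hT r f g
    have hrB : r ∉ Branch T r s := notMem_branch_self hT r s
    have hqr : q ≠ r := by
      rintro rfl
      have := same_branch_dist hT hfB hgB
      omega
    have hqf : q = f → False := by
      rintro rfl
      -- dist r g = dist r q + dist q g > dist r f
      have hgq : T.dist q g ≠ 0 := fun h =>
        hgf (hT.isConnected.dist_eq_zero_iff.mp h).symm
      have hmax := hfmax g (by rw [hC, Finset.mem_filter]; exact ⟨Finset.mem_univ g, hgB, hgcore⟩)
      omega
    have hqg : q = g → False := by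
      rintro rfl
      -- g on geodesic r-f
      obtain ⟨ta, hta, hra⟩ := exists_branch hT (show r ≠ q from fun h => hqr h.symm)
      obtain ⟨tb, htb, hfb⟩ := exists_branch hT (show f ≠ q from fun h => hgf h.symm)
      have hne : ta ≠ tb := by
        rintro rfl
        have := same_branch_dist hT hra hfb
        omega
      exact core_between_cores hT (hnoreg q hgB) hgcore hta htb hne hra hr hfb hfdeg
    by_cases hqfin : q = f
    · exact hqf hqfin
    by_cases hqgin : q = g
    · exact hqg hqgin
    · -- genuine junction
      obtain ⟨ta, tb, tc, hta, htb, htc, h12, h13, h23, hra, hfb, hgc⟩ :=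
        junction hT hq1 hq2 hq3 hqr hqfin hqgin
      have hqdeg : 3 ≤ T.degree q := degree_ge_three_of_junction hT hta htb htc h12 h13 h23
      have hqB : q ∈ Branch T r s := mem_branch_of_on_geodesic hT hs hfB hqr hq1
      exact core_between_cores hT (hnoreg q hqB) hqdeg htb htc h23 hfb hfdeg hgc hgcore
  · left
    push_neg at hcore
    exact ⟨hs, fun w hw => by have := hcore w hw; omega⟩

end Structural


section Landmarks

variable [DecidableRel T.Adj]

lemma inter_gleg {L : Set V} {v x : V} (hgl : IsGLeg T v x) :
    (L ∩ GLegVerts T v) ∩ Branch T v x = L ∩ Branch T v x := by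
  ext w
  constructor
  · rintro ⟨⟨hL, -⟩, hB⟩; exact ⟨hL, hB⟩
  · rintro ⟨hL, hB⟩; exact ⟨⟨hL, ⟨x, hgl, hB⟩⟩, hB⟩

lemma sol_m_two {S : Set V} {v x : V} (h : SolM2 T v x S ∨ SolM3 T v x S) :
    ∃ τ₁ ∈ S ∩ Branch T v x, ∃ τ₂ ∈ S ∩ Branch T v x, τ₁ ≠ τ₂ := by
  rcases h with ⟨u, a, b, -, -, -, ⟨w₁, h1, w₂, h2, hne, -, -⟩, -⟩ |
    ⟨u, a, b, -, ⟨w₁, h1, w₂, h2, hne⟩, -⟩ <;> exact ⟨w₁, h1, w₂, h2, hne⟩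

lemma gleg_nonempty_or_s0 {S : Set V} {v x : V} (hls : IsLocalSet T v S)
    (hgl : IsGLeg T v x) :
    (S ∩ Branch T v x).Nonempty ∨ (IsStandardLeg T v x ∧ SolS0 T v x S) := by
  rcases hgl with hstd | hmod
  · rcases hls.2.2.1 x hstd with h0 | ⟨w, hw, -⟩ | ⟨w₁, h1, -⟩ | h3
    · exact Or.inr ⟨hstd, h0⟩
    · exact Or.inl ⟨w, by rw [hw]; rfl⟩
    · exact Or.inl ⟨w₁, h1⟩
    · exact Or.inl ⟨x, by rw [h3]; rfl⟩
  · rcases hls.2.2.2.1 x hmod with ⟨u, a, b, -, h | h⟩ | h | h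
    · exact Or.inl ⟨a, by rw [h]; rfl⟩
    · exact Or.inl ⟨b, by rw [h]; rfl⟩
    · rcases h with ⟨u, a, b, -, -, -, ⟨w₁, h1, -⟩, -⟩
      exact Or.inl ⟨w₁, h1⟩
    · rcases h with ⟨u, a, b, -, ⟨w₁, h1, -⟩, -⟩
      exact Or.inl ⟨w₁, h1⟩

/-- A2: every branch containing a regular core contains two distinct landmarks. -/
lemma two_landmarks (hT : T.IsTree) {L : Set V}
    (hloc : ∀ v : V, IsRegularCore T v → IsLocalSet T v (L ∩ GLegVerts T v))
    {m x₀ : V} (hx₀ : T.Adj m x₀) {r0 : V} (hr0 : r0 ∈ Branch T m x₀)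
    (hreg0 : IsRegularCore T r0) :
    ∃ τ₁ ∈ L ∩ Branch T m x₀, ∃ τ₂ ∈ L ∩ Branch T m x₀, τ₁ ≠ τ₂ := by
  classical
  set R := Finset.univ.filter (fun z => z ∈ Branch T m x₀ ∧ IsRegularCore T z) with hR
  have hRne : R.Nonempty := ⟨r0, by rw [hR, Finset.mem_filter]; exact ⟨Finset.mem_univ _, hr0, hreg0⟩⟩
  obtain ⟨r, hrR, hrmax⟩ := R.exists_max_image (fun z => T.dist m z) hRne
  rw [hR, Finset.mem_filter] at hrR
  obtain ⟨-, hrB, hreg⟩ := hrR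
  have hrm : r ≠ m := mem_branch_ne hT hrB
  obtain ⟨y, hyadj, hmy⟩ := exists_branch hT (Ne.symm hrm)
  have hrdeg : 3 ≤ T.degree r := hreg.1
  -- every other branch of r is inside Branch m x₀ and has no regular core
  have hfar : ∀ s, T.Adj r s → s ≠ y →
      (Branch T r s ⊆ Branch T m x₀) ∧ IsGLeg T r s := by
    intro s hsadj hsy
    have hsub : ∀ z ∈ Branch T r s, z ∈ Branch T m x₀ ∧ T.dist m z = T.dist m r + T.dist r z :=
      fun z hz => branch_nested hT hx₀ hrB hsadj hz
        (branch_disjoint hT hyadj hsadj (Ne.symm hsy) hmy)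
    refine ⟨fun z hz => (hsub z hz).1, ?_⟩
    refine branch_gleg hT hrdeg hsadj ?_
    intro z hz hzreg
    have hd := (hsub z hz).2
    have hpos := (branch_dist_pos hT hz).2
    have hmax := hrmax z (by rw [hR, Finset.mem_filter]; exact ⟨Finset.mem_univ _, (hsub z hz).1, hzreg⟩)
    omega
  set S := L ∩ GLegVerts T r with hS
  have hls : IsLocalSet T r S := hloc r hreg
  -- landmarks of a far g-leg lie in L ∩ Branch m x₀
  have hland : ∀ s, T.Adj r s → s ≠ y → ∀ τ ∈ S ∩ Branch T r s, τ ∈ L ∩ Branch T m x₀ := by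
    intro s hsadj hsy τ hτ
    rw [hS, inter_gleg (hfar s hsadj hsy).2] at hτ
    exact ⟨hτ.1, (hfar s hsadj hsy).1 hτ.2⟩
  set N := (T.neighborFinset r).erase y with hN
  have hNcard : N.card + 1 = T.degree r := by
    rw [hN, Finset.card_erase_of_mem (by rw [SimpleGraph.mem_neighborFinset]; exact hyadj)]
    have : 1 ≤ T.degree r := by omega
    have : T.degree r = (T.neighborFinset r).card := rfl
    omega
  have hNadj : ∀ s ∈ N, T.Adj r s ∧ s ≠ y := by
    intro s hsN
    rw [hN, Finset.mem_erase, SimpleGraph.mem_neighborFinset] at hsN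
    exact ⟨hsN.2, hsN.1⟩
  -- no two far legs can both be empty
  have hempties : ∀ s ∈ N, ∀ t ∈ N, s ≠ t → ¬(S ∩ Branch T r s).Nonempty →
      ¬(S ∩ Branch T r t).Nonempty → False := by
    intro s hsN t htN hst hes het
    obtain ⟨hsadj, hsy⟩ := hNadj s hsN
    obtain ⟨htadj, hty⟩ := hNadj t htN
    have h1 := (gleg_nonempty_or_s0 hls (hfar s hsadj hsy).2).resolve_left hes
    have h2 := (gleg_nonempty_or_s0 hls (hfar t htadj hty).2).resolve_left het
    exact hls.2.1 s t h1.1 h2.1 hst h1.2 h2.2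
  by_cases htwo : ∃ s ∈ N, ∃ t ∈ N, s ≠ t ∧
      (S ∩ Branch T r s).Nonempty ∧ (S ∩ Branch T r t).Nonempty
  · obtain ⟨s, hsN, t, htN, hst, ⟨τ₁, hτ₁⟩, ⟨τ₂, hτ₂⟩⟩ := htwo
    obtain ⟨hsadj, hsy⟩ := hNadj s hsN
    obtain ⟨htadj, hty⟩ := hNadj t htN
    refine ⟨τ₁, hland s hsadj hsy τ₁ hτ₁, τ₂, hland t htadj hty τ₂ hτ₂, ?_⟩
    rintro rfl
    exact (branch_disjoint hT hsadj htadj hst hτ₁.2) hτ₂.2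
  · -- exactly one empty leg, and it forces SolS2 / SolM2/M3 on the other
    push_neg at htwo
    have hN2 : 2 ≤ N.card := by omega
    obtain ⟨s, hsN, t, htN, hst⟩ := Finset.one_lt_card.mp (show 1 < N.card by omega)
    -- one of them is empty
    have key : ∀ s t, s ∈ N → t ∈ N → s ≠ t → ¬(S ∩ Branch T r s).Nonempty →
        ∃ τ₁ ∈ L ∩ Branch T m x₀, ∃ τ₂ ∈ L ∩ Branch T m x₀, τ₁ ≠ τ₂ := by
      intro s t hsN htN hst hes
      obtain ⟨hsadj, hsy⟩ := hNadj s hsN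
      obtain ⟨htadj, hty⟩ := hNadj t htN
      have hs0 := (gleg_nonempty_or_s0 hls (hfar s hsadj hsy).2).resolve_left hes
      have htwoelem : ∃ τ₁ ∈ S ∩ Branch T r t, ∃ τ₂ ∈ S ∩ Branch T r t, τ₁ ≠ τ₂ := by
        rcases (hfar t htadj hty).2 with htstd | htmod
        · -- t standard: degree 3 and both long, use condition (4)
          have hcard2 : T.degree r = 3 := by
            have hsub : N ⊆ {s, t} := by
              intro u huN
              by_contra hust
              simp only [Finset.mem_insert, Finset.mem_singleton] at hust
              push_neg at hust
              by_cases hu : (S ∩ Branch T r u).Nonempty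
              · by_cases ht' : (S ∩ Branch T r t).Nonempty
                · exact absurd (htwo u huN t htN hust.2 hu) (Set.nonempty_iff_ne_empty.mp ht')
                · exact hempties s hsN t htN hst hes ht'
              · exact hempties s hsN u huN (Ne.symm hust.1) hes hu
            have := Finset.card_le_card hsub
            have : ({s, t} : Finset V).card ≤ 2 := Finset.card_insert_le _ _ |>.trans (by simp)
            omega
          -- neither leg is short, else r would be a small core
          have hslong : IsLongLeg T r s := by
            refine ⟨hs0.1, ?_⟩
            intro hshort
            exact hreg.2 ⟨hcard2, s, t, hst, ⟨hs0.1, hshort⟩, htstd⟩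
          have htlong : IsLongLeg T r t := by
            refine ⟨htstd, ?_⟩
            intro hshort
            exact hreg.2 ⟨hcard2, t, s, Ne.symm hst, ⟨htstd, hshort⟩, hs0.1⟩
          exact hls.2.2.2.2.2.1 s hslong hs0.2 t htlong (Ne.symm hst)
        · -- t modified: condition (3) excludes SolM1
          have hm := hls.2.2.2.1 t htmod
          have hnm1 := hls.2.2.2.2.1 ⟨s, hs0.1, hs0.2⟩ t htmod
          exact sol_m_two (hm.resolve_left hnm1)
      obtain ⟨τ₁, hτ₁, τ₂, hτ₂, hne⟩ := htwoelem
      exact ⟨τ₁, hland t htadj hty τ₁ hτ₁, τ₂, hland t htadj hty τ₂ hτ₂, hne⟩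
    by_cases hes : (S ∩ Branch T r s).Nonempty
    · by_cases het : (S ∩ Branch T r t).Nonempty
      · exact absurd (htwo s hsN t htN hst hes) (Set.nonempty_iff_ne_empty.mp het)
      · exact key t s htN hsN (Ne.symm hst) het
    · exact key s t hsN htN hst hes

end Landmarks


section PairLegsAux

variable [DecidableRel T.Adj]

lemma gleg_adj {v x : V} (h : IsGLeg T v x) : T.Adj v x := by
  rcases h with h | h
  · exact h.1
  · exact h.1

/-- Auxiliary for Case X: if one g-leg carries no landmark, the other carries two. -/
lemma pair_legs_aux (hT : T.IsTree) {L : Set V} {m : V} (hreg : IsRegularCore T m)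
    (hls : IsLocalSet T m (L ∩ GLegVerts T m))
    {n₁ n₂ : V} (h₁ : IsGLeg T m n₁) (h₂ : IsGLeg T m n₂) (hne : n₁ ≠ n₂)
    {u w : V} (hu : u ∈ Branch T m n₁) (hw : w ∈ Branch T m n₂)
    (huL : u ∉ L) (hwL : w ∉ L) (hd : T.dist m u = T.dist m w)
    (hempty : L ∩ Branch T m n₁ = ∅)
    (e₁ : (L ∩ GLegVerts T m) ∩ Branch T m n₁ = L ∩ Branch T m n₁)
    (e₂ : (L ∩ GLegVerts T m) ∩ Branch T m n₂ = L ∩ Branch T m n₂) :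
    ∃ τ₁ ∈ L ∩ Branch T m n₂, ∃ τ₂ ∈ L ∩ Branch T m n₂, τ₁ ≠ τ₂ := by
  set S := L ∩ GLegVerts T m with hS
  have hes : ¬ (S ∩ Branch T m n₁).Nonempty := by
    rw [hS, e₁, hempty]; exact Set.not_nonempty_empty
  have hs0 := (gleg_nonempty_or_s0 hls h₁).resolve_left hes
  have two_from : (∃ τ₁ ∈ S ∩ Branch T m n₂, ∃ τ₂ ∈ S ∩ Branch T m n₂, τ₁ ≠ τ₂) →
      ∃ τ₁ ∈ L ∩ Branch T m n₂, ∃ τ₂ ∈ L ∩ Branch T m n₂, τ₁ ≠ τ₂ := by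
    rw [hS, e₂]; exact id
  rcases h₂ with h₂std | h₂mod
  · -- n₂ standard
    rcases hls.2.2.1 n₂ h₂std with h0 | ⟨τ, hτeq, hτd⟩ | hsol2 | h3
    · exact absurd h0 (fun h => hls.2.1 n₁ n₂ hs0.1 h₂std hne hs0.2 h)
    · -- (s,1) solution: impossible
      exfalso
      have hτmem : τ ∈ S ∩ Branch T m n₂ := by rw [hτeq]; rfl
      by_cases h₂short : Branch T m n₂ = {n₂}
      · -- short leg: τ = n₂ has depth 1 < 2
        have : τ = n₂ := by
          have := hτmem.2
          rw [h₂short] at this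
          exact this
        subst this
        have : T.dist m τ = 1 := dist_eq_one_iff_adj.mpr (gleg_adj (Or.inl h₂std))
        omega
      · -- long leg
        by_cases h₁short : Branch T m n₁ = {n₁}
        · -- condition (5)
          have h5 := hls.2.2.2.2.2.2 ⟨n₁, ⟨hs0.1, h₁short⟩, hs0.2⟩ n₂ ⟨h₂std, h₂short⟩
          rcases h5 with h5 | h5
          · obtain ⟨w₁, hw₁, w₂, hw₂, hw12⟩ := h5
            rw [hτeq] at hw₁ hw₂
            rw [hw₁, hw₂] at hw12
            exact hw12 rfl
          · -- SolS3 and SolS1 together: n₂ = τ with depth ≥ 2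
            rw [h5] at hτmem
            have : τ = n₂ := hτmem
            subst this
            have : T.dist m τ = 1 := dist_eq_one_iff_adj.mpr (gleg_adj (Or.inl h₂std))
            omega
        · -- condition (4)
          have h4 := hls.2.2.2.2.2.1 n₁ ⟨hs0.1, h₁short⟩ hs0.2 n₂ ⟨h₂std, h₂short⟩ (Ne.symm hne)
          obtain ⟨w₁, hw₁, w₂, hw₂, hw12⟩ := h4
          rw [hτeq] at hw₁ hw₂
          rw [hw₁, hw₂] at hw12
          exact hw12 rfl
    · exact two_from hsol2
    · -- (s,3) solution: impossible since w would be a landmark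
      exfalso
      have hn₂L : n₂ ∈ L := by
        have : n₂ ∈ S ∩ Branch T m n₂ := by rw [h3]; rfl
        exact this.1.1
      by_cases h₂short : Branch T m n₂ = {n₂}
      · -- w = n₂ ∈ L, contradiction
        have : w = n₂ := by rw [h₂short] at hw; exact hw
        subst this
        exact hwL hn₂L
      · by_cases h₁short : Branch T m n₁ = {n₁}
        · -- u = n₁, depth 1, so w = n₂
          have hu1 : u = n₁ := by rw [h₁short] at hu; exact hu
          subst hu1
          have : T.dist m u = 1 := dist_eq_one_iff_adj.mpr (gleg_adj (Or.inl hs0.1))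
          have hw1 : w = n₂ := branch_depth_one hT hw (by omega)
          subst hw1
          exact hwL hn₂L
        · -- both long: condition (4) gives SolS2, contradicting SolS3
          have h4 := hls.2.2.2.2.2.1 n₁ ⟨hs0.1, h₁short⟩ hs0.2 n₂ ⟨h₂std, h₂short⟩ (Ne.symm hne)
          obtain ⟨w₁, hw₁, w₂, hw₂, hw12⟩ := h4
          rw [h3] at hw₁ hw₂
          have e1 : w₁ = n₂ := hw₁
          have e2 : w₂ = n₂ := hw₂
          rw [e1, e2] at hw12
          exact hw12 rfl
  · -- n₂ modified: condition (3) excludes (m,1)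
    have hm := hls.2.2.2.1 n₂ h₂mod
    have hnm1 := hls.2.2.2.2.1 ⟨n₁, hs0.1, hs0.2⟩ n₂ h₂mod
    exact two_from (sol_m_two (hm.resolve_left hnm1))

end PairLegsAux

section PairLegs

variable [DecidableRel T.Adj]

/-- Case X: two g-legs of a regular core, with non-landmark vertices at equal depth,
carry at least two landmarks between them. -/
lemma pair_legs (hT : T.IsTree) {L : Set V} {m : V} (hreg : IsRegularCore T m)
    (hls : IsLocalSet T m (L ∩ GLegVerts T m))
    {n₁ n₂ : V} (h₁ : IsGLeg T m n₁) (h₂ : IsGLeg T m n₂) (hne : n₁ ≠ n₂)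
    {u w : V} (hu : u ∈ Branch T m n₁) (hw : w ∈ Branch T m n₂)
    (huL : u ∉ L) (hwL : w ∉ L) (hd : T.dist m u = T.dist m w) :
    ∃ τ₁ ∈ L ∩ (Branch T m n₁ ∪ Branch T m n₂),
      ∃ τ₂ ∈ L ∩ (Branch T m n₁ ∪ Branch T m n₂), τ₁ ≠ τ₂ := by
  have e₁ : (L ∩ GLegVerts T m) ∩ Branch T m n₁ = L ∩ Branch T m n₁ := inter_gleg h₁
  have e₂ : (L ∩ GLegVerts T m) ∩ Branch T m n₂ = L ∩ Branch T m n₂ := inter_gleg h₂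
  by_cases hne1 : (L ∩ Branch T m n₁).Nonempty
  · by_cases hne2 : (L ∩ Branch T m n₂).Nonempty
    · obtain ⟨τ₁, hτ₁⟩ := hne1
      obtain ⟨τ₂, hτ₂⟩ := hne2
      refine ⟨τ₁, ⟨hτ₁.1, Or.inl hτ₁.2⟩, τ₂, ⟨hτ₂.1, Or.inr hτ₂.2⟩, ?_⟩
      rintro rfl
      exact branch_disjoint hT (gleg_adj h₁) (gleg_adj h₂) hne hτ₁.2 hτ₂.2
    · -- branch 2 empty; find two landmarks in branch 1
      obtain ⟨τ₁, h1, τ₂, h2, h12⟩ := pair_legs_aux hT hreg hls h₂ h₁ (Ne.symm hne) hw hu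
        hwL huL hd.symm (Set.not_nonempty_iff_eq_empty.mp hne2) e₂ e₁
      exact ⟨τ₁, ⟨h1.1, Or.inl h1.2⟩, τ₂, ⟨h2.1, Or.inl h2.2⟩, h12⟩
  · obtain ⟨τ₁, h1, τ₂, h2, h12⟩ := pair_legs_aux hT hreg hls h₁ h₂ hne hu hw
      huL hwL hd (Set.not_nonempty_iff_eq_empty.mp hne1) e₁ e₂
    exact ⟨τ₁, ⟨h1.1, Or.inr h1.2⟩, τ₂, ⟨h2.1, Or.inr h2.2⟩, h12⟩

end PairLegs


section CaseY

variable [DecidableRel T.Adj]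

/-- Case Y: midpoint is a small core whose two leg-branches contain the
non-landmark pair; then the enclosing modified leg supplies two landmarks. -/
lemma small_core_midpoint (hT : T.IsTree) {L : Set V}
    (hloc : ∀ v : V, IsRegularCore T v → IsLocalSet T v (L ∩ GLegVerts T v))
    (hex : ∃ v : V, IsRegularCore T v)
    {m : V} (hsmall : IsSmallCore T m)
    {n₁ n₂ : V} (hadj₁ : T.Adj m n₁) (hadj₂ : T.Adj m n₂) (hne : n₁ ≠ n₂)
    (hnoreg₁ : ∀ z ∈ Branch T m n₁, ¬ IsRegularCore T z)
    (hnoreg₂ : ∀ z ∈ Branch T m n₂, ¬ IsRegularCore T z)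
    {u w : V} (hu : u ∈ Branch T m n₁) (hw : w ∈ Branch T m n₂)
    (huL : u ∉ L) (hwL : w ∉ L) (hd : T.dist m u = T.dist m w) :
    ∃ τ₁ ∈ L ∩ (Branch T m n₁ ∪ Branch T m n₂),
      ∃ τ₂ ∈ L ∩ (Branch T m n₁ ∪ Branch T m n₂), τ₁ ≠ τ₂ := by
  classical
  obtain ⟨hdeg3, xS, yS, hxyS, hxshort, hystd⟩ := hsmall
  have hsmall' : IsSmallCore T m := ⟨hdeg3, xS, yS, hxyS, hxshort, hystd⟩
  -- the nearest regular core r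
  set R := Finset.univ.filter (fun z => IsRegularCore T z) with hR
  have hRne : R.Nonempty := by
    obtain ⟨v, hv⟩ := hex
    exact ⟨v, by rw [hR, Finset.mem_filter]; exact ⟨Finset.mem_univ _, hv⟩⟩
  obtain ⟨r, hrR, hrmin⟩ := R.exists_min_image (fun z => T.dist m z) hRne
  rw [hR, Finset.mem_filter] at hrR
  have hreg : IsRegularCore T r := hrR.2
  have hrm : r ≠ m := by
    rintro rfl
    exact hreg.2 hsmall'
  -- the third neighbour n₃ of m, towards r
  obtain ⟨n₃, hadj₃, hr₃⟩ := exists_branch hT hrm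
  have h₃1 : n₃ ≠ n₁ := by
    rintro rfl
    exact hnoreg₁ r hr₃ hreg
  have h₃2 : n₃ ≠ n₂ := by
    rintro rfl
    exact hnoreg₂ r hr₃ hreg
  -- neighbours of m are exactly n₁, n₂, n₃
  have hnbr : ∀ z, T.Adj m z → z = n₁ ∨ z = n₂ ∨ z = n₃ := by
    intro z hz
    have hsub : ({n₁, n₂, n₃} : Finset V) ⊆ T.neighborFinset m := by
      intro t ht
      simp only [Finset.mem_insert, Finset.mem_singleton] at ht
      rcases ht with rfl | rfl | rfl <;> simp [SimpleGraph.mem_neighborFinset, hadj₁, hadj₂, hadj₃]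
    have hcard : ({n₁, n₂, n₃} : Finset V).card = 3 := by
      rw [Finset.card_insert_of_notMem (by simp [hne, Ne.symm h₃1]),
          Finset.card_insert_of_notMem (by simp [Ne.symm h₃2]), Finset.card_singleton]
    have hdm : T.degree m = (T.neighborFinset m).card := rfl
    have heq : ({n₁, n₂, n₃} : Finset V) = T.neighborFinset m :=
      Finset.eq_of_subset_of_card_le hsub (by omega)
    have : z ∈ ({n₁, n₂, n₃} : Finset V) := by
      rw [heq, SimpleGraph.mem_neighborFinset]; exact hz
    simpa using this
  -- the legs of m are n₁ and n₂ (in some order); get standard-leg structure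
  have hxs_n : xS = n₁ ∨ xS = n₂ := by
    rcases hnbr xS hxshort.1.1 with h | h | h
    · exact Or.inl h
    · exact Or.inr h
    · exfalso
      subst h
      have := hxshort.1.2 r hr₃
      have := hreg.1
      have hic : (3:ℕ) ≤ T.degree r := hreg.1
      omega
  have hys_n : yS = n₁ ∨ yS = n₂ := by
    rcases hnbr yS hystd.1 with h | h | h
    · exact Or.inl h
    · exact Or.inr h
    · exfalso
      subst h
      have := hystd.2 r hr₃
      have hic : (3:ℕ) ≤ T.degree r := hreg.1
      omega
  have hlegs : (IsShortLeg T m n₁ ∧ IsStandardLeg T m n₂) ∨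
      (IsShortLeg T m n₂ ∧ IsStandardLeg T m n₁) := by
    rcases hxs_n with rfl | rfl
    · rcases hys_n with rfl | rfl
      · exact absurd rfl hxyS
      · exact Or.inl ⟨hxshort, hystd⟩
    · rcases hys_n with rfl | rfl
      · exact Or.inr ⟨hxshort, hystd⟩
      · exact absurd rfl hxyS
  have hstd₁ : IsStandardLeg T m n₁ := by
    rcases hlegs with ⟨h, -⟩ | ⟨-, h⟩
    · exact h.1
    · exact h
  have hstd₂ : IsStandardLeg T m n₂ := by
    rcases hlegs with ⟨-, h⟩ | ⟨h, -⟩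
    · exact h
    · exact h.1
  -- u = n₁ and w = n₂ (both at depth one)
  have hdepth : T.dist m u = 1 := by
    rcases hlegs with ⟨h, -⟩ | ⟨h, -⟩
    · have : u = n₁ := by
        have := hu; rw [h.2] at this; exact this
      subst this
      exact dist_eq_one_iff_adj.mpr hadj₁
    · have : w = n₂ := by
        have := hw; rw [h.2] at this; exact this
      subst this
      rw [hd]
      exact dist_eq_one_iff_adj.mpr hadj₂
  have hu₁ : u = n₁ := branch_depth_one hT hu hdepth
  have hw₂ : w = n₂ := branch_depth_one hT hw (by omega)
  rw [hu₁] at huL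
  rw [hw₂] at hwL
  -- r's branch towards m
  obtain ⟨xs, hxadj, hmB⟩ := exists_branch hT (show m ≠ r from fun h => hrm h.symm)
  -- master claim: geodesic trichotomy inside Branch r xs
  have master : ∀ z ∈ Branch T r xs, (T.dist r m = T.dist r z + T.dist z m) ∨
      (T.dist r z = T.dist r m + T.dist m z ∧
        (z = m ∨ z ∈ Branch T m n₁ ∨ z ∈ Branch T m n₂)) := by
    intro z hz
    obtain ⟨q, hq1, hq2, hq3⟩ := median' hT r m z
    have hqr : q ≠ r := by
      rintro rfl
      have := same_branch_dist hT hmB hz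
      omega
    by_cases hqz : q = z
    · subst hqz; exact Or.inl hq1
    by_cases hqm : q = m
    · rw [hqm] at hq1 hq2 hq3
      refine Or.inr ⟨hq2, ?_⟩
      by_cases hzm : z = m
      · exact Or.inl hzm
      · obtain ⟨n, hnadj, hzn⟩ := exists_branch hT hzm
        have hn3 : n ≠ n₃ := by
          rintro rfl
          have := same_branch_dist hT hr₃ hzn
          omega
        rcases hnbr n hnadj with rfl | rfl | rfl
        · exact Or.inr (Or.inl hzn)
        · exact Or.inr (Or.inr hzn)
        · exact absurd rfl hn3
    · exfalso
      obtain ⟨ta, tb, tc, hta, htb, htc, h12, h13, h23, hra, hmb, hzc⟩ :=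
        junction hT hq1 hq2 hq3 hqr hqm hqz
      have hqdeg := degree_ge_three_of_junction hT hta htb htc h12 h13 h23
      have hqB : q ∈ Branch T r xs := mem_branch_of_on_geodesic hT hxadj hmB hqr hq1
      have hqpos : 1 ≤ T.dist r q := (branch_dist_pos hT hqB).2
      have hqnr : ¬ IsRegularCore T q := by
        intro hqreg
        have := hrmin q (by rw [hR, Finset.mem_filter]; exact ⟨Finset.mem_univ _, hqreg⟩)
        have c1 : T.dist m r = T.dist r m := SimpleGraph.dist_comm
        have c2 : T.dist m q = T.dist q m := SimpleGraph.dist_comm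
        omega
      exact small_no_two_core_branches hT (small_of_not_regular hqdeg hqnr) hta htb h12
        hra hreg.1 hmb (by omega)
  -- all cores of Branch r xs equal m
  have hcores : ∀ z ∈ Branch T r xs, 3 ≤ T.degree z → z = m := by
    intro z hz hdz
    by_cases hzm : z = m
    · exact hzm
    rcases master z hz with hgeo | ⟨heq, hloc'⟩
    · exfalso
      have hzr : z ≠ r := mem_branch_ne hT hz
      have hzpos : 1 ≤ T.dist r z := (branch_dist_pos hT hz).2
      have hzmpos : 1 ≤ T.dist z m := by
        have : T.dist z m ≠ 0 := fun h => hzm (hT.isConnected.dist_eq_zero_iff.mp h)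
        omega
      have hznr : ¬ IsRegularCore T z := by
        intro hzreg
        have := hrmin z (by rw [hR, Finset.mem_filter]; exact ⟨Finset.mem_univ _, hzreg⟩)
        have c1 : T.dist m r = T.dist r m := SimpleGraph.dist_comm
        have c2 : T.dist m z = T.dist z m := SimpleGraph.dist_comm
        omega
      obtain ⟨ta, hta, hra⟩ := exists_branch hT (show r ≠ z from Ne.symm hzr)
      obtain ⟨tb, htb, hmb⟩ := exists_branch hT (show m ≠ z from fun h => hzm h.symm)
      have htab : ta ≠ tb := by
        rintro rfl
        have := same_branch_dist hT hra hmb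
        omega
      exact small_no_two_core_branches hT (small_of_not_regular hdz hznr) hta htb htab
        hra hreg.1 hmb (by omega)
    · rcases hloc' with rfl | hz1 | hz2
      · rfl
      · exact absurd (hstd₁.2 z hz1) (by omega)
      · exact absurd (hstd₂.2 z hz2) (by omega)
  -- vertices at position dist r m + 1 are n₁ or n₂
  have hpos1 : ∀ z ∈ Branch T r xs, T.dist r z = T.dist r m + 1 → z = n₁ ∨ z = n₂ := by
    intro z hz hdz
    rcases master z hz with hgeo | ⟨heq, hloc'⟩
    · omega
    · rcases hloc' with rfl | hz1 | hz2
      · rw [SimpleGraph.dist_self] at heq; omega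
      · have h1 : T.dist m z = 1 := by omega
        exact Or.inl (branch_depth_one hT hz1 h1)
      · have h1 : T.dist m z = 1 := by omega
        exact Or.inr (branch_depth_one hT hz2 h1)
  -- the modified leg
  have hmod : IsModifiedLeg T r xs :=
    ⟨hxadj, m, hmB, hsmall', fun z hz hcz => hcores z hz hcz⟩
  have hls := hloc r hreg
  set S := L ∩ GLegVerts T r with hS
  have hSL : ∀ τ, τ ∈ S → τ ∈ L := fun τ hτ => hτ.1
  -- kill (m,1) and extract from (m,2)/(m,3)
  have hab_nL : ∀ (u' a' : V), u' ∈ Branch T r xs → IsSmallCore T u' →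
      a' ∈ Branch T r xs → T.dist r a' = T.dist r u' + 1 → a' ∉ L := by
    intro u' a' hu' hsm' ha' hda'
    have : u' = m := hcores u' hu' (by have := hsm'.1; omega)
    subst this
    rcases hpos1 a' ha' (by omega) with rfl | rfl
    · exact huL
    · exact hwL
  rcases hls.2.2.2.1 xs hmod with hm1 | hm2 | hm3
  · exfalso
    obtain ⟨u', a, b, hpair, hcase⟩ := hm1
    obtain ⟨hu'B, hu'sm, hab, haB, hbB, hda, hdb, -⟩ := hpair
    rcases hcase with h | h
    · have : a ∈ S ∩ Branch T r xs := by rw [h]; rfl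
      exact hab_nL u' a hu'B hu'sm haB hda (hSL a this.1)
    · have : b ∈ S ∩ Branch T r xs := by rw [h]; rfl
      exact hab_nL u' b hu'B hu'sm hbB hdb (hSL b this.1)
  · obtain ⟨u', a, b, hpair, haS, hbS, ⟨w₁, hw₁, w₂, hw₂, hne12, hd₁, hd₂⟩, hall⟩ := hm2
    obtain ⟨hu'B, hu'sm, -, -, -, -, -, -⟩ := hpair
    have hu'm : u' = m := hcores u' hu'B (by have := hu'sm.1; omega)
    rw [hu'm] at hd₁ hd₂
    have hplace : ∀ τ, τ ∈ S ∩ Branch T r xs → T.dist r m + 2 ≤ T.dist r τ →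
        τ ∈ L ∩ (Branch T m n₁ ∪ Branch T m n₂) := by
      intro τ hτ hdτ
      rcases master τ hτ.2 with hgeo | ⟨heq, hloc'⟩
      · omega
      · rcases hloc' with rfl | h1 | h2
        · rw [SimpleGraph.dist_self] at heq; omega
        · exact ⟨hSL τ hτ.1, Or.inl h1⟩
        · exact ⟨hSL τ hτ.1, Or.inr h2⟩
    exact ⟨w₁, hplace w₁ hw₁ hd₁, w₂, hplace w₂ hw₂ hd₂, hne12⟩
  · exfalso
    obtain ⟨u', a, b, hpair, -, hcase⟩ := hm3
    obtain ⟨hu'B, hu'sm, hab, haB, hbB, hda, hdb, -⟩ := hpair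
    rcases hcase with h | h
    · exact hab_nL u' a hu'B hu'sm haB hda (h.1)
    · exact hab_nL u' b hu'B hu'sm hbB hdb (h.1)

end CaseY

end TreeProof

/-- in a tree with at least two regular cores, if the restriction of `L`
to the g-legs of every regular core is a local set, then `L` is a landmark set. -/
theorem local_sets_give_landmark_set_two_regular_cores
    (T : SimpleGraph V) [DecidableRel T.Adj] (hT : T.IsTree)
    (hcores : ∃ v w : V, v ≠ w ∧ IsRegularCore T v ∧ IsRegularCore T w)
    (L : Set V)
    (hloc : ∀ v : V, IsRegularCore T v → IsLocalSet T v (L ∩ GLegVerts T v)) :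
    IsLandmarkSet T L := by
  intro u w huw huL hwL
  obtain ⟨r₁, r₂, hr12, hreg₁, hreg₂⟩ := hcores
  by_cases hpar : T.dist u w % 2 = 1
  · -- odd distance: every vertex separates; take two landmarks anywhere
    obtain ⟨x, hxadj, hr₂x⟩ := TreeProof.exists_branch hT (Ne.symm hr12)
    obtain ⟨τ₁, hτ₁, τ₂, hτ₂, hne⟩ := TreeProof.two_landmarks hT hloc hxadj hr₂x hreg₂
    exact ⟨τ₁, hτ₁.1, τ₂, hτ₂.1, hne, TreeProof.odd_dist_separates hT hpar τ₁,
      TreeProof.odd_dist_separates hT hpar τ₂⟩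
  · -- even distance: midpoint m
    have hpos : 0 < T.dist u w := hT.isConnected.pos_dist_of_ne huw
    obtain ⟨m, hm1, hm2⟩ := TreeProof.exists_between hT u w (T.dist u w / 2) (by omega)
    have hdmu : T.dist m u = T.dist u w / 2 := by rw [SimpleGraph.dist_comm]; exact hm1
    have hdmw : T.dist m w = T.dist u w / 2 := by omega
    have hhalf : 1 ≤ T.dist u w / 2 := by omega
    have hum : u ≠ m := fun h => by rw [← h, SimpleGraph.dist_self] at hdmu; omega
    have hwm : w ≠ m := fun h => by rw [← h, SimpleGraph.dist_self] at hdmw; omega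
    obtain ⟨n₁, hadj₁, hu₁⟩ := TreeProof.exists_branch hT hum
    obtain ⟨n₂, hadj₂, hw₂⟩ := TreeProof.exists_branch hT hwm
    have hne12 : n₁ ≠ n₂ := by
      rintro rfl
      have := TreeProof.same_branch_dist hT hu₁ hw₂
      have c1 : T.dist u m = T.dist m u := SimpleGraph.dist_comm
      omega
    have hsep : ∀ τ ∈ Branch T m n₁ ∪ Branch T m n₂, Separates T τ u w := by
      rintro τ (hτ | hτ)
      · have h1 : T.dist τ w = T.dist τ m + T.dist m w :=
          TreeProof.dist_add_of_notMem_branch hT hadj₁ hτ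
            (TreeProof.branch_disjoint hT hadj₂ hadj₁ (Ne.symm hne12) hw₂)
        have h2 := TreeProof.same_branch_dist hT hτ hu₁
        show T.dist τ u ≠ T.dist τ w
        omega
      · have h1 : T.dist τ u = T.dist τ m + T.dist m u :=
          TreeProof.dist_add_of_notMem_branch hT hadj₂ hτ
            (TreeProof.branch_disjoint hT hadj₁ hadj₂ hne12 hu₁)
        have h2 := TreeProof.same_branch_dist hT hτ hw₂
        show T.dist τ u ≠ T.dist τ w
        omega
    by_cases hregb1 : ∃ z ∈ Branch T m n₁, IsRegularCore T z
    · obtain ⟨z, hz, hzreg⟩ := hregb1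
      obtain ⟨τ₁, hτ₁, τ₂, hτ₂, hne⟩ := TreeProof.two_landmarks hT hloc hadj₁ hz hzreg
      exact ⟨τ₁, hτ₁.1, τ₂, hτ₂.1, hne, hsep τ₁ (Or.inl hτ₁.2), hsep τ₂ (Or.inl hτ₂.2)⟩
    by_cases hregb2 : ∃ z ∈ Branch T m n₂, IsRegularCore T z
    · obtain ⟨z, hz, hzreg⟩ := hregb2
      obtain ⟨τ₁, hτ₁, τ₂, hτ₂, hne⟩ := TreeProof.two_landmarks hT hloc hadj₂ hz hzreg
      exact ⟨τ₁, hτ₁.1, τ₂, hτ₂.1, hne, hsep τ₁ (Or.inr hτ₁.2), hsep τ₂ (Or.inr hτ₂.2)⟩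
    push_neg at hregb1 hregb2
    by_cases hdegm : 3 ≤ T.degree m
    · by_cases hregm : IsRegularCore T m
      · have hgl₁ : IsGLeg T m n₁ := TreeProof.branch_gleg hT hdegm hadj₁ hregb1
        have hgl₂ : IsGLeg T m n₂ := TreeProof.branch_gleg hT hdegm hadj₂ hregb2
        obtain ⟨τ₁, hτ₁, τ₂, hτ₂, hne⟩ := TreeProof.pair_legs hT hregm (hloc m hregm)
          hgl₁ hgl₂ hne12 hu₁ hw₂ huL hwL (by omega)
        exact ⟨τ₁, hτ₁.1, τ₂, hτ₂.1, hne, hsep τ₁ hτ₁.2, hsep τ₂ hτ₂.2⟩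
      · have hsm := TreeProof.small_of_not_regular hdegm hregm
        obtain ⟨τ₁, hτ₁, τ₂, hτ₂, hne⟩ := TreeProof.small_core_midpoint hT hloc ⟨r₁, hreg₁⟩
          hsm hadj₁ hadj₂ hne12 hregb1 hregb2 hu₁ hw₂ huL hwL (by omega)
        exact ⟨τ₁, hτ₁.1, τ₂, hτ₂.1, hne, hsep τ₁ hτ₁.2, hsep τ₂ hτ₂.2⟩
    · exfalso
      have hr₁m : r₁ ≠ m := by
        rintro rfl
        exact hdegm hreg₁.1
      obtain ⟨n, hnadj, hr₁n⟩ := TreeProof.exists_branch hT hr₁m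
      have hn12 : n = n₁ ∨ n = n₂ := by
        by_contra hcon
        push_neg at hcon
        have hsub : ({n₁, n₂, n} : Finset V) ⊆ T.neighborFinset m := by
          intro t ht
          simp only [Finset.mem_insert, Finset.mem_singleton] at ht
          rcases ht with rfl | rfl | rfl <;>
            simp [SimpleGraph.mem_neighborFinset, hadj₁, hadj₂, hnadj]
        have hcard : ({n₁, n₂, n} : Finset V).card = 3 := by
          rw [Finset.card_insert_of_notMem (by simp [hne12, Ne.symm hcon.1]),
              Finset.card_insert_of_notMem (by simp [Ne.symm hcon.2]), Finset.card_singleton]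
        have hdm : T.degree m = (T.neighborFinset m).card := rfl
        have := Finset.card_le_card hsub
        omega
      rcases hn12 with rfl | rfl
      · exact hregb1 r₁ hr₁n hreg₁
      · exact hregb2 r₁ hr₁n hreg₁
end

section
/- Let T be a tree with exactly one core v, where v has at least three g-legs, and let L ⊆ V be a set that contains a local set for v. If L contains at least one vertex of each g-leg of v, then L is a landmark set of T. -/
/-!
Because `v` is the only core, every branch of `v` is a path hanging off `v`: a vertex is
determined by its branch and its distance from `v`, and the path between vertices of different
branches passes through `v`. Take `u ≠ w` with `d(v,u) ≤ d(v,w)`. If the inequality is strict,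
`w` misses at least two of the three given branches, and a landmark `τ` in a branch avoiding `w`
separates them: `d(τ,w) = d(v,τ) + d(v,w)`, while `d(τ,u)` is either `d(v,τ) + d(v,u)` or, when
`u` shares the branch of `τ`, smaller still. If `d(v,u) = d(v,w)`, then `u` and `w` lie in
different branches, and the landmarks in these two branches separate them.
-/

open SimpleGraph

variable {V : Type*} [Fintype V] [DecidableEq V]

namespace SimpleGraph

variable {α : Type*} {G : SimpleGraph α} {a b u v z : α}

theorem Walk.dist_add_dist_of_mem_support {p : G.Walk a b} (hp : p.length = G.dist a b)
    (hz : z ∈ p.support) : G.dist a z + G.dist z b = G.dist a b := by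
  classical
  rw [← length_eq_dist_of_subwalk hp (p.isSubwalk_takeUntil hz),
    ← length_eq_dist_of_subwalk hp (p.isSubwalk_dropUntil hz), ← hp, ← Walk.length_append,
    p.take_spec hz]

theorem IsTree.mem_support_of_dist_add_dist (hG : G.IsTree) {p : G.Walk a b} (hp : p.IsPath)
    (h : G.dist a z + G.dist z b = G.dist a b) : z ∈ p.support := by
  obtain ⟨q, -, hq⟩ := hG.connected.exists_path_of_dist a z
  obtain ⟨r, -, hr⟩ := hG.connected.exists_path_of_dist z b
  have hqr : (q.append r).IsPath :=
    (q.append r).isPath_of_length_eq_dist (by rw [Walk.length_append, hq, hr, h])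
  have : q.append r = p :=
    congrArg Subtype.val ((hG.isAcyclic.subsingleton_path a b).elim ⟨_, hqr⟩ ⟨p, hp⟩)
  exact this ▸ (Walk.mem_support_append_iff q r).mpr (Or.inl q.end_mem_support)

theorem Connected.exists_adj_dist_add_one_eq (hG : G.Connected) (hne : u ≠ v) :
    ∃ u', G.Adj u' u ∧ G.dist v u' + 1 = G.dist v u := by
  obtain ⟨p, hp⟩ := hG.exists_walk_length_eq_dist u v
  cases p with
  | nil => exact absurd rfl hne
  | @cons _ u' _ hadj q =>
    refine ⟨u', hadj.symm, ?_⟩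
    have h₁ : G.dist u v ≤ G.dist u u' + G.dist u' v := hG.dist_triangle
    have h₂ := dist_le q
    rw [dist_eq_one_iff_adj.mpr hadj] at h₁
    rw [Walk.length_cons] at hp
    rw [dist_comm, dist_comm (u := v)]
    omega

theorem three_le_degree_of_adj [Fintype (G.neighborSet z)] {c : α} (ha : G.Adj z a)
    (hb : G.Adj z b) (hc : G.Adj z c) (hab : a ≠ b) (hac : a ≠ c) (hbc : b ≠ c) :
    3 ≤ G.degree z := by
  classical
  rw [← card_neighborFinset_eq_degree]
  calc 3 = ({a, b, c} : Finset α).card :=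
        (Finset.card_eq_three.mpr ⟨a, b, c, hab, hac, hbc, rfl⟩).symm
    _ ≤ _ := Finset.card_le_card <| by
        intro t ht
        simp only [Finset.mem_insert, Finset.mem_singleton] at ht
        rcases ht with rfl | rfl | rfl <;> simpa

end SimpleGraph

section Branch

variable {α : Type*} {T : SimpleGraph α} {v x y a b τ σ u w : α}

theorem mem_branch : w ∈ Branch T v x ↔ T.dist v w = T.dist x w + 1 := Iff.rfl

theorem notMem_branch_self : v ∉ Branch T v x := by
  simp [mem_branch]

theorem notMem_branch_iff (hT : T.IsTree) (hy : T.Adj v y) :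
    w ∉ Branch T v y ↔ T.dist y w = T.dist v w + 1 := by
  rw [mem_branch, dist_comm (u := v), dist_comm (u := y)]
  have := hT.dist_eq_dist_add_one_of_adj w hy
  omega

theorem mem_branch_of_adj (hT : T.IsTree) (hy : T.Adj v y) (ha : a ∈ Branch T v y)
    (hab : T.Adj a b) (hb : b ≠ v) : b ∈ Branch T v y := by
  by_contra hb'
  rw [notMem_branch_iff hT hy] at hb'
  rw [mem_branch] at ha
  have hab₁ : T.dist a b = 1 := dist_eq_one_iff_adj.mpr hab
  rcases hT.dist_eq_dist_add_one_of_adj v hab with hvb | hvb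
  · -- `b` lies on the path from `v` to `a`, which runs through `y`
    obtain ⟨q, hq, hql⟩ := hT.connected.exists_path_of_dist y a
    have hvq : v ∉ q.support := fun hv => by
      have := Walk.dist_add_dist_of_mem_support hql hv
      rw [dist_eq_one_iff_adj.mpr hy.symm] at this
      omega
    have hbp : b ∈ (Walk.cons hy q).support :=
      hT.mem_support_of_dist_add_dist (hq.cons hvq) (by rw [dist_comm (u := b)]; omega)
    rw [Walk.support_cons, List.mem_cons] at hbp
    have := Walk.dist_add_dist_of_mem_support hql (hbp.resolve_left hb)
    rw [dist_comm (u := b)] at this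
    omega
  · have : T.dist y b ≤ T.dist y a + T.dist a b := hT.connected.dist_triangle
    omega

theorem mem_branch_of_walk (hT : T.IsTree) (hy : T.Adj v y) (p : T.Walk a b)
    (ha : a ∈ Branch T v y) (hv : v ∉ p.support) : b ∈ Branch T v y := by
  induction p with
  | nil => exact ha
  | cons hadj q ih =>
    rw [Walk.support_cons, List.mem_cons, not_or] at hv
    exact ih (mem_branch_of_adj hT hy ha hadj (fun h => hv.2 (h ▸ q.start_mem_support))) hv.2

theorem dist_eq_add_of_mem_branch_of_notMem (hT : T.IsTree) (hy : T.Adj v y)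
    (hτ : τ ∈ Branch T v y) (hu : u ∉ Branch T v y) :
    T.dist τ u = T.dist v τ + T.dist v u := by
  obtain ⟨p, hp⟩ := hT.connected.exists_walk_length_eq_dist τ u
  have hv : v ∈ p.support := by
    by_contra hv
    exact hu (mem_branch_of_walk hT hy p hτ hv)
  rw [← Walk.dist_add_dist_of_mem_support hp hv, dist_comm]

theorem eq_of_mem_branch_of_mem_branch (hT : T.IsTree) (hx : T.Adj v x) (hy : T.Adj v y)
    (hwx : w ∈ Branch T v x) (hwy : w ∈ Branch T v y) : x = y := by
  by_contra hxy
  have hx' : x ∉ Branch T v y := by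
    rw [mem_branch, dist_eq_one_iff_adj.mpr hx]
    have := hT.connected.pos_dist_of_ne (Ne.symm hxy)
    omega
  have := dist_eq_add_of_mem_branch_of_notMem hT hy hwy hx'
  rw [mem_branch] at hwx
  rw [dist_eq_one_iff_adj.mpr hx, dist_comm] at this
  omega

theorem ne_of_mem_branch (hT : T.IsTree) (hx : T.Adj v x) (hy : T.Adj v y) (hxy : x ≠ y)
    (hτ : τ ∈ Branch T v x) (hσ : σ ∈ Branch T v y) : τ ≠ σ := by
  rintro rfl
  exact hxy (eq_of_mem_branch_of_mem_branch hT hx hy hτ hσ)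

theorem exists_adj_mem_branch (hT : T.IsTree) (hw : w ≠ v) :
    ∃ x, T.Adj v x ∧ w ∈ Branch T v x := by
  obtain ⟨x, hx, hxd⟩ := hT.connected.exists_adj_dist_add_one_eq hw.symm
  exact ⟨x, hx.symm, by rw [mem_branch, dist_comm, dist_comm (u := x)]; omega⟩

theorem IsStandardLeg.injOn_dist [Fintype α] [DecidableRel T.Adj] (hT : T.IsTree)
    (hx : IsStandardLeg T v x) : Set.InjOn (T.dist v) (Branch T v x) := by
  suffices ∀ n u w, T.dist v u = n → T.dist v w = n →
      u ∈ Branch T v x → w ∈ Branch T v x → u = w from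
    fun u hu w hw huw => this _ u w rfl huw.symm hu hw
  intro n
  induction n with
  | zero => intro u w hu _ hub _; rw [mem_branch] at hub; omega
  | succ n ih =>
    intro u w hu hw hub hwb
    rw [mem_branch] at hub hwb
    rcases Nat.eq_zero_or_pos n with rfl | hn
    · exact (hT.connected.dist_eq_zero_iff.mp (by omega : T.dist x u = 0)).symm.trans
        (hT.connected.dist_eq_zero_iff.mp (by omega : T.dist x w = 0))
    have hne : ∀ {t}, T.dist v t ≠ 0 → t ≠ v := fun h ht => h (ht ▸ dist_self)
    obtain ⟨u', hu', hu'd⟩ := hT.connected.exists_adj_dist_add_one_eq (hne (by omega) : u ≠ v)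
    obtain ⟨w', hw', hw'd⟩ := hT.connected.exists_adj_dist_add_one_eq (hne (by omega) : w ≠ v)
    have hu'v : u' ≠ v := hne (by omega)
    have hu'b := mem_branch_of_adj hT hx.1 hub hu'.symm hu'v
    obtain rfl : u' = w' :=
      ih u' w' (by omega) (by omega) hu'b (mem_branch_of_adj hT hx.1 hwb hw'.symm (hne (by omega)))
    -- otherwise `u'` would have the three neighbours `u`, `w` and its own predecessor
    by_contra huw
    obtain ⟨z, hz, hzd⟩ := hT.connected.exists_adj_dist_add_one_eq hu'v
    have := three_le_degree_of_adj hu' hw' hz.symm huw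
      (fun h => by rw [h] at hu; omega) (fun h => by rw [h] at hw; omega)
    have := hx.2 u' hu'b
    omega

theorem separates_of_mem_branch (hT : T.IsTree) (hy : T.Adj v y) (hτ : τ ∈ Branch T v y)
    (hu : u ∈ Branch T v y) (hw : w ∉ Branch T v y) (huw : T.dist v u ≤ T.dist v w) :
    Separates T τ u w := by
  have htri : T.dist τ u ≤ T.dist y τ + T.dist y u :=
    dist_comm (u := y) ▸ hT.connected.dist_triangle
  rw [Separates, dist_eq_add_of_mem_branch_of_notMem hT hy hτ hw]
  rw [mem_branch] at hτ hu
  omega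

theorem separates_of_notMem_branch (hT : T.IsTree) (hy : T.Adj v y) (hτ : τ ∈ Branch T v y)
    (hu : u ∉ Branch T v y) (hw : w ∉ Branch T v y) (huw : T.dist v u ≠ T.dist v w) :
    Separates T τ u w := by
  rw [Separates, dist_eq_add_of_mem_branch_of_notMem hT hy hτ hu,
    dist_eq_add_of_mem_branch_of_notMem hT hy hτ hw]
  omega

theorem separates_of_dist_lt (hT : T.IsTree) (hy : T.Adj v y) (hτ : τ ∈ Branch T v y)
    (hw : w ∉ Branch T v y) (huw : T.dist v u < T.dist v w) : Separates T τ u w := by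
  by_cases hu : u ∈ Branch T v y
  · exact separates_of_mem_branch hT hy hτ hu hw huw.le
  · exact separates_of_notMem_branch hT hy hτ hu hw huw.ne

theorem HasTwoSeparators.symm {L : Set α} (h : HasTwoSeparators T L u w) :
    HasTwoSeparators T L w u :=
  let ⟨τ₁, h₁, τ₂, h₂, hne, hs₁, hs₂⟩ := h
  ⟨τ₁, h₁, τ₂, h₂, hne, hs₁.symm, hs₂.symm⟩

theorem hasTwoSeparators_of_branches (hT : T.IsTree) {L : Set α}
    (hL : ∀ x, T.Adj v x → ∃ τ ∈ L, τ ∈ Branch T v x) {y₁ y₂ : α} (hy₁ : T.Adj v y₁)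
    (hy₂ : T.Adj v y₂) (hy : y₁ ≠ y₂) (h₁ : ∀ τ ∈ Branch T v y₁, Separates T τ u w)
    (h₂ : ∀ τ ∈ Branch T v y₂, Separates T τ u w) : HasTwoSeparators T L u w := by
  obtain ⟨τ₁, hτ₁L, hτ₁⟩ := hL y₁ hy₁
  obtain ⟨τ₂, hτ₂L, hτ₂⟩ := hL y₂ hy₂
  exact ⟨τ₁, hτ₁L, τ₂, hτ₂L, ne_of_mem_branch hT hy₁ hy₂ hy hτ₁ hτ₂, h₁ τ₁ hτ₁, h₂ τ₂ hτ₂⟩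

theorem exists_two_adj_notMem_branch (hT : T.IsTree) {x₁ x₂ x₃ : α} (h₁₂ : x₁ ≠ x₂)
    (h₁₃ : x₁ ≠ x₃) (h₂₃ : x₂ ≠ x₃) (hx₁ : T.Adj v x₁) (hx₂ : T.Adj v x₂) (hx₃ : T.Adj v x₃)
    (w : α) : ∃ y₁ y₂, y₁ ≠ y₂ ∧ T.Adj v y₁ ∧ T.Adj v y₂ ∧
      w ∉ Branch T v y₁ ∧ w ∉ Branch T v y₂ := by
  have hdisj : ∀ {x y}, T.Adj v x → T.Adj v y → x ≠ y → w ∈ Branch T v x → w ∉ Branch T v y :=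
    fun hx hy hxy hwx hwy => hxy (eq_of_mem_branch_of_mem_branch hT hx hy hwx hwy)
  by_cases hw₁ : w ∈ Branch T v x₁
  · exact ⟨x₂, x₃, h₂₃, hx₂, hx₃, hdisj hx₁ hx₂ h₁₂ hw₁, hdisj hx₁ hx₃ h₁₃ hw₁⟩
  by_cases hw₂ : w ∈ Branch T v x₂
  · exact ⟨x₁, x₃, h₁₃, hx₁, hx₃, hw₁, hdisj hx₂ hx₃ h₂₃ hw₂⟩
  · exact ⟨x₁, x₂, h₁₂, hx₁, hx₂, hw₁, hw₂⟩

theorem hasTwoSeparators_of_ne (hT : T.IsTree)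
    (hinj : ∀ x, T.Adj v x → Set.InjOn (T.dist v) (Branch T v x)) {x₁ x₂ x₃ : α}
    (h₁₂ : x₁ ≠ x₂) (h₁₃ : x₁ ≠ x₃) (h₂₃ : x₂ ≠ x₃) (hx₁ : T.Adj v x₁) (hx₂ : T.Adj v x₂)
    (hx₃ : T.Adj v x₃) {L : Set α} (hL : ∀ x, T.Adj v x → ∃ τ ∈ L, τ ∈ Branch T v x)
    (huw : u ≠ w) : HasTwoSeparators T L u w := by
  wlog hle : T.dist v u ≤ T.dist v w generalizing u w
  · exact (this huw.symm (le_of_not_ge hle)).symm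
  rcases hle.lt_or_eq with hlt | heq
  · obtain ⟨y₁, y₂, hy, hy₁, hy₂, hw₁, hw₂⟩ :=
      exists_two_adj_notMem_branch hT h₁₂ h₁₃ h₂₃ hx₁ hx₂ hx₃ w
    exact hasTwoSeparators_of_branches hT hL hy₁ hy₂ hy
      (fun τ hτ => separates_of_dist_lt hT hy₁ hτ hw₁ hlt)
      (fun τ hτ => separates_of_dist_lt hT hy₂ hτ hw₂ hlt)
  have hu : u ≠ v := by
    rintro rfl
    exact huw (hT.connected.dist_eq_zero_iff.mp (heq.symm.trans dist_self))
  have hw : w ≠ v := by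
    rintro rfl
    exact huw (hT.connected.dist_eq_zero_iff.mp (heq.trans dist_self)).symm
  obtain ⟨xu, hxu, hub⟩ := exists_adj_mem_branch hT hu
  obtain ⟨xw, hxw, hwb⟩ := exists_adj_mem_branch hT hw
  have hx : xu ≠ xw := by
    rintro rfl
    exact huw (hinj xu hxu hub hwb heq)
  have hwu : w ∉ Branch T v xu := fun h => hx (eq_of_mem_branch_of_mem_branch hT hxu hxw h hwb)
  have huw' : u ∉ Branch T v xw := fun h => hx (eq_of_mem_branch_of_mem_branch hT hxu hxw hub h)
  exact hasTwoSeparators_of_branches hT hL hxu hxw hx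
    (fun τ hτ => separates_of_mem_branch hT hxu hτ hub hwu hle)
    (fun τ hτ => (separates_of_mem_branch hT hxw hτ hwb huw' heq.ge).symm)

theorem IsGLeg.adj [Fintype α] [DecidableRel T.Adj] (h : IsGLeg T v x) : T.Adj v x :=
  h.elim And.left And.left

theorem isStandardLeg_of_forall_isCore [Fintype α] [DecidableRel T.Adj]
    (huniq : ∀ w, IsCore T w → w = v) (hx : T.Adj v x) : IsStandardLeg T v x :=
  ⟨hx, fun w hw => by
    by_contra h
    exact notMem_branch_self (huniq w (not_le.mp h) ▸ hw)⟩

end Branch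

theorem one_core_vertex_on_each_gleg_landmark_general
    (T : SimpleGraph V) [DecidableRel T.Adj] (hT : T.IsTree)
    (v : V) (huniq : ∀ w : V, IsCore T w → w = v)
    (hlegs : ∃ x₁ x₂ x₃ : V, x₁ ≠ x₂ ∧ x₁ ≠ x₃ ∧ x₂ ≠ x₃ ∧
      IsGLeg T v x₁ ∧ IsGLeg T v x₂ ∧ IsGLeg T v x₃)
    (L : Set V)
    (hall : ∀ x : V, IsGLeg T v x → ∃ w ∈ L, w ∈ Branch T v x) :
    IsLandmarkSet T L := by
  have hstd := fun x => isStandardLeg_of_forall_isCore (x := x) huniq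
  obtain ⟨x₁, x₂, x₃, h₁₂, h₁₃, h₂₃, g₁, g₂, g₃⟩ := hlegs
  intro u w huw _ _
  exact hasTwoSeparators_of_ne hT (fun x hx => (hstd x hx).injOn_dist hT) h₁₂ h₁₃ h₂₃
    g₁.adj g₂.adj g₃.adj (fun x hx => hall x (Or.inl (hstd x hx))) huw

/-- a tree with exactly one core `v` having at least three g-legs; if `L`
contains a local set for `v` and at least one vertex of each g-leg of `v`, then `L`
is a landmark set. -/
theorem one_core_vertex_on_each_gleg_landmark
    (T : SimpleGraph V) [DecidableRel T.Adj] (hT : T.IsTree)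
    (v : V) (hv : IsCore T v) (huniq : ∀ w : V, IsCore T w → w = v)
    (hlegs : ∃ x₁ x₂ x₃ : V, x₁ ≠ x₂ ∧ x₁ ≠ x₃ ∧ x₂ ≠ x₃ ∧
      IsGLeg T v x₁ ∧ IsGLeg T v x₂ ∧ IsGLeg T v x₃)
    (L : Set V) (hloc : ∃ S : Set V, S ⊆ L ∧ IsLocalSet T v S)
    (hall : ∀ x : V, IsGLeg T v x → ∃ w ∈ L, w ∈ Branch T v x) :
    IsLandmarkSet T L :=
  one_core_vertex_on_each_gleg_landmark_general T hT v huniq hlegs L hall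
end
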